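/- arXiv:1605.05223 — 13 statements merged into one kernel-verified Lean document; each statement's English description precedes it below -/
import Mathlib

section
/- For any node split, the objective satisfies 0 ≤ J ≤ 1. -/
/-!
A `[0, 1]`-valued quantity `p` lies at distance at most `β (1 - p) + (1 - β) p` from any
`β ∈ [0, 1]`. Averaging this with the weights `π` around the mean `β` bounds the mean absolute
deviation by `2 β (1 - β)`, so `J ≤ 4 β (1 - β) ≤ 1`.
-/

open Finset

lemma abs_sub_le_mul_one_sub_add_one_sub_mul {b p : ℝ} (hb0 : 0 ≤ b) (hb1 : b ≤ 1)
    (hp0 : 0 ≤ p) (hp1 : p ≤ 1) : |b - p| ≤ b * (1 - p) + (1 - b) * p := by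
  rcases abs_cases (b - p) with ⟨h, -⟩ | ⟨h, -⟩ <;> rw [h] <;> nlinarith

section WeightedMean

variable {ι : Type*} [Fintype ι] {w f : ι → ℝ}

lemma weighted_mean_mem_Icc (hw : ∀ i, 0 ≤ w i) (hws : ∑ i, w i = 1)
    (hf0 : ∀ i, 0 ≤ f i) (hf1 : ∀ i, f i ≤ 1) :
    0 ≤ ∑ i, w i * f i ∧ ∑ i, w i * f i ≤ 1 :=
  ⟨sum_nonneg fun i _ => mul_nonneg (hw i) (hf0 i),
    hws ▸ sum_le_sum fun i _ => mul_le_of_le_one_right (hw i) (hf1 i)⟩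

lemma weighted_abs_dev_le (hw : ∀ i, 0 ≤ w i) (hws : ∑ i, w i = 1)
    (hf0 : ∀ i, 0 ≤ f i) (hf1 : ∀ i, f i ≤ 1) :
    ∑ i, w i * |∑ j, w j * f j - f i| ≤ 2 * (∑ i, w i * f i) * (1 - ∑ i, w i * f i) := by
  set β := ∑ i, w i * f i with hβ
  obtain ⟨hβ0, hβ1⟩ := weighted_mean_mem_Icc hw hws hf0 hf1
  calc ∑ i, w i * |β - f i|
      ≤ ∑ i, w i * (β * (1 - f i) + (1 - β) * f i) :=
        sum_le_sum fun i _ => mul_le_mul_of_nonneg_left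
          (abs_sub_le_mul_one_sub_add_one_sub_mul hβ0 hβ1 (hf0 i) (hf1 i)) (hw i)
    _ = β * ∑ i, w i + (1 - 2 * β) * ∑ i, w i * f i := by
        rw [mul_sum, mul_sum, ← sum_add_distrib]
        exact sum_congr rfl fun i _ => by ring
    _ = 2 * β * (1 - β) := by rw [hws, ← hβ]; ring

end WeightedMean

theorem objective_mem_unit_interval_general (k : ℕ)
    (π P : Fin k → ℝ) (β J : ℝ)
    (hπ : ∀ i, 0 ≤ π i) (hπs : ∑ i, π i = 1)
    (hP0 : ∀ i, 0 ≤ P i) (hP1 : ∀ i, P i ≤ 1)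
    (hβ : β = ∑ i, π i * P i)
    (hJ : J = 2 * ∑ i, π i * |β - P i|) :
    0 ≤ J ∧ J ≤ 1 := by
  have hdev_nonneg : 0 ≤ ∑ i, π i * |β - P i| :=
    sum_nonneg fun i _ => mul_nonneg (hπ i) (abs_nonneg _)
  have hdev_le : ∑ i, π i * |β - P i| ≤ 2 * β * (1 - β) := by
    subst hβ
    exact weighted_abs_dev_le hπ hπs hP0 hP1
  rw [hJ]
  constructor
  · linarith
  · nlinarith [sq_nonneg (2 * β - 1)]

/-- Lemma 1 (first part): for any node split the objective satisfies `0 ≤ J ≤ 1`. -/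
theorem objective_mem_unit_interval (k : ℕ) (hk : 2 ≤ k)
    (π P : Fin k → ℝ) (β J : ℝ)
    (hπ : ∀ i, 0 ≤ π i) (hπs : ∑ i, π i = 1)
    (hP0 : ∀ i, 0 ≤ P i) (hP1 : ∀ i, P i ≤ 1)
    (hβ : β = ∑ i, π i * P i)
    (hJ : J = 2 * ∑ i, π i * |β - P i|) :
    0 ≤ J ∧ J ≤ 1 :=
  objective_mem_unit_interval_general k π P β J hπ hπs hP0 hP1 hβ hJ
end

section
/- For any node split, J = 1 if and only if the split is maximally pure and maximally balanced, i.e. J = 1 ↔ (α = 0 ∧ β = 1/2). -/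
/-!
Write `β = ∑ πᵢ Pᵢ`. For `b, x ∈ [0, 1]` the triangle inequality applied to
`b - x = b (1 - x) - x (1 - b)` gives `|b - x| ≤ b + x - 2 b x`; averaging with weights `π`
yields `J ≤ 4 β (1 - β) ≤ 1`, so `J = 1` forces `β = 1/2`. At `β = 1/2` the identity
`min x (1 - x) = 1/2 - |1/2 - x|` turns `J` into `1 - 2 α`, so then `J = 1` iff `α = 0`.
-/

open Finset

lemma abs_sub_le_add_sub_two_mul {b x : ℝ} (hb₀ : 0 ≤ b) (hb₁ : b ≤ 1) (hx₀ : 0 ≤ x)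
    (hx₁ : x ≤ 1) : |b - x| ≤ b + x - 2 * b * x :=
  abs_sub_le_iff.2 ⟨by nlinarith, by nlinarith⟩

lemma min_one_sub_eq_half_sub_abs (x : ℝ) : min x (1 - x) = 1 / 2 - |1 / 2 - x| := by
  rcases le_total x (1 / 2) with h | h
  · rw [abs_of_nonneg (by linarith), min_eq_left (by linarith)]; ring
  · rw [abs_of_nonpos (by linarith), min_eq_right (by linarith)]; ring

section NodeSplit

variable {ι : Type*} [Fintype ι] (π P : ι → ℝ)

noncomputable def balance : ℝ := ∑ i, π i * P i

noncomputable def purity : ℝ := ∑ i, π i * min (P i) (1 - P i)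

noncomputable def objective : ℝ := 2 * ∑ i, π i * |balance π P - P i|

variable {π P}

lemma balance_nonneg (hπ : ∀ i, 0 ≤ π i) (hP₀ : ∀ i, 0 ≤ P i) : 0 ≤ balance π P :=
  sum_nonneg fun i _ => mul_nonneg (hπ i) (hP₀ i)

lemma balance_le_one (hπ : ∀ i, 0 ≤ π i) (hπs : ∑ i, π i = 1) (hP₁ : ∀ i, P i ≤ 1) :
    balance π P ≤ 1 :=
  calc balance π P ≤ ∑ i, π i := sum_le_sum fun i _ => mul_le_of_le_one_right (hπ i) (hP₁ i)
    _ = 1 := hπs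

lemma objective_le_four_mul_balance_mul (hπ : ∀ i, 0 ≤ π i) (hπs : ∑ i, π i = 1)
    (hP₀ : ∀ i, 0 ≤ P i) (hP₁ : ∀ i, P i ≤ 1) :
    objective π P ≤ 4 * balance π P * (1 - balance π P) := by
  set β := balance π P
  have hβ₀ : 0 ≤ β := balance_nonneg hπ hP₀
  have hβ₁ : β ≤ 1 := balance_le_one hπ hπs hP₁
  have hsum : ∑ i, π i * |β - P i| ≤ ∑ i, π i * (β + P i - 2 * β * P i) :=
    sum_le_sum fun i _ => mul_le_mul_of_nonneg_left
      (abs_sub_le_add_sub_two_mul hβ₀ hβ₁ (hP₀ i) (hP₁ i)) (hπ i)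
  have hexpand : ∑ i, π i * (β + P i - 2 * β * P i) = β * ∑ i, π i + (1 - 2 * β) * β := by
    simp only [β, balance, mul_sum, ← sum_add_distrib]
    exact sum_congr rfl fun i _ => by ring
  rw [hπs] at hexpand
  rw [objective]
  linarith

lemma objective_eq_one_sub_two_mul_purity (hπs : ∑ i, π i = 1) (hβ : balance π P = 1 / 2) :
    objective π P = 1 - 2 * purity π P := by
  have hsum : ∑ i, π i * |1 / 2 - P i| = (∑ i, π i) / 2 - purity π P := by
    simp only [purity, min_one_sub_eq_half_sub_abs, sum_div, ← sum_sub_distrib]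
    exact sum_congr rfl fun i _ => by ring
  rw [objective, hβ, hsum, hπs]
  ring

end NodeSplit

theorem objective_eq_one_iff_pure_balanced_general (k : ℕ)
    (π P : Fin k → ℝ) (β α J : ℝ)
    (hπ : ∀ i, 0 ≤ π i) (hπs : ∑ i, π i = 1)
    (hP0 : ∀ i, 0 ≤ P i) (hP1 : ∀ i, P i ≤ 1)
    (hβ : β = ∑ i, π i * P i)
    (hα : α = ∑ i, π i * min (P i) (1 - P i))
    (hJ : J = 2 * ∑ i, π i * |β - P i|) :
    J = 1 ↔ (α = 0 ∧ β = 1/2) := by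
  obtain rfl : β = balance π P := hβ
  obtain rfl : α = purity π P := hα
  obtain rfl : J = objective π P := hJ
  have hJ_le := objective_le_four_mul_balance_mul hπ hπs hP0 hP1
  refine ⟨fun hJ₁ => ?_, fun ⟨hα₀, hβ_half⟩ => ?_⟩
  · have hβ_half : balance π P = 1 / 2 := by nlinarith [sq_nonneg (2 * balance π P - 1)]
    have hJα := objective_eq_one_sub_two_mul_purity hπs hβ_half
    exact ⟨by linarith, hβ_half⟩
  · rw [objective_eq_one_sub_two_mul_purity hπs hβ_half, hα₀]
    ring

/-- Lemma 1 (second part): `J = 1` iff the split is maximally pure and maximally balanced. -/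
theorem objective_eq_one_iff_pure_balanced (k : ℕ) (hk : 2 ≤ k)
    (π P : Fin k → ℝ) (β α J : ℝ)
    (hπ : ∀ i, 0 ≤ π i) (hπs : ∑ i, π i = 1)
    (hP0 : ∀ i, 0 ≤ P i) (hP1 : ∀ i, P i ≤ 1)
    (hβ : β = ∑ i, π i * P i)
    (hα : α = ∑ i, π i * min (P i) (1 - P i))
    (hJ : J = 2 * ∑ i, π i * |β - P i|) :
    J = 1 ↔ (α = 0 ∧ β = 1/2) :=
  objective_eq_one_iff_pure_balanced_general k π P β α J hπ hπs hP0 hP1 hβ hα hJ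
end

section
/- For any node split, the balancing factor satisfies (1 - Real.sqrt (1 - J))/2 ≤ β ≤ (1 + Real.sqrt (1 - J))/2; equivalently, J ≤ 4β(1-β). -/
open Finset

/-- The right-hand side is the chord of the convex function `x ↦ |m - x|` over `[0, 1]`. -/
lemma abs_sub_le_of_mem_unitInterval {m x : ℝ} (hm : m ∈ Set.Icc (0 : ℝ) 1)
    (hx : x ∈ Set.Icc (0 : ℝ) 1) : |m - x| ≤ m * (1 - x) + x * (1 - m) := by
  obtain ⟨hm0, hm1⟩ := hm
  obtain ⟨hx0, hx1⟩ := hx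
  rw [abs_le]
  constructor <;> nlinarith

lemma sum_mul_abs_sub_le_of_mem_unitInterval {ι : Type*} {s : Finset ι} {w x : ι → ℝ} {m : ℝ}
    (hw : ∀ i ∈ s, 0 ≤ w i) (hws : ∑ i ∈ s, w i = 1) (hx : ∀ i ∈ s, x i ∈ Set.Icc (0 : ℝ) 1)
    (hm : ∑ i ∈ s, w i * x i = m) :
    ∑ i ∈ s, w i * |m - x i| ≤ 2 * m * (1 - m) := by
  have hm01 : m ∈ Set.Icc (0 : ℝ) 1 := by
    simpa only [← hm, smul_eq_mul] using (convex_Icc (0 : ℝ) 1).sum_mem hw hws hx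
  calc ∑ i ∈ s, w i * |m - x i|
      ≤ ∑ i ∈ s, w i * (m * (1 - x i) + x i * (1 - m)) :=
        sum_le_sum fun i hi =>
          mul_le_mul_of_nonneg_left (abs_sub_le_of_mem_unitInterval hm01 (hx i hi)) (hw i hi)
    _ = ∑ i ∈ s, (m * w i + (1 - 2 * m) * (w i * x i)) := sum_congr rfl fun i _ => by ring
    _ = m * 1 + (1 - 2 * m) * m := by rw [sum_add_distrib, ← mul_sum, ← mul_sum, hws, hm]
    _ = 2 * m * (1 - m) := by ring

lemma mem_Icc_of_le_four_mul_mul_one_sub {b j : ℝ} (h : j ≤ 4 * b * (1 - b)) :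
    b ∈ Set.Icc ((1 - Real.sqrt (1 - j)) / 2) ((1 + Real.sqrt (1 - j)) / 2) := by
  obtain ⟨hlo, hhi⟩ := abs_le.mp (Real.abs_le_sqrt (x := 2 * b - 1) (y := 1 - j) (by nlinarith))
  constructor <;> linarith

theorem balancing_factor_interval_general (k : ℕ)
    (π P : Fin k → ℝ) (β J : ℝ)
    (hπ : ∀ i, 0 ≤ π i) (hπs : ∑ i, π i = 1)
    (hP0 : ∀ i, 0 ≤ P i) (hP1 : ∀ i, P i ≤ 1)
    (hβ : β = ∑ i, π i * P i)
    (hJ : J = 2 * ∑ i, π i * |β - P i|) :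
    ((1 - Real.sqrt (1 - J)) / 2 ≤ β ∧ β ≤ (1 + Real.sqrt (1 - J)) / 2)
      ∧ J ≤ 4 * β * (1 - β) := by
  have hJβ : J ≤ 4 * β * (1 - β) := by
    have := sum_mul_abs_sub_le_of_mem_unitInterval (fun i _ => hπ i) hπs
      (fun i _ => ⟨hP0 i, hP1 i⟩) hβ.symm
    rw [hJ]
    linarith
  exact ⟨mem_Icc_of_le_four_mul_mul_one_sub hJβ, hJβ⟩

/-- Lemma 2: the balancing factor lies in `[(1-√(1-J))/2, (1+√(1-J))/2]`;
equivalently `J ≤ 4β(1-β)`. -/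
theorem balancing_factor_interval (k : ℕ) (hk : 2 ≤ k)
    (π P : Fin k → ℝ) (β J : ℝ)
    (hπ : ∀ i, 0 ≤ π i) (hπs : ∑ i, π i = 1)
    (hP0 : ∀ i, 0 ≤ P i) (hP1 : ∀ i, P i ≤ 1)
    (hβ : β = ∑ i, π i * P i)
    (hJ : J = 2 * ∑ i, π i * |β - P i|) :
    ((1 - Real.sqrt (1 - J)) / 2 ≤ β ∧ β ≤ (1 + Real.sqrt (1 - J)) / 2)
      ∧ J ≤ 4 * β * (1 - β) :=
  balancing_factor_interval_general k π P β J hπ hπs hP0 hP1 hβ hJ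
end

section
/- For any constant C > 2, the weighted leaf modified Gini-entropy satisfies Real.sqrt (C - 1) ≤ ∑ l, w l * G^m (π l) ≤ (t+1) * w * Real.sqrt (k*C - 1). -/
/-!
Since `∑ i, p i = 1`, the squared terms of `G^m(p)` add up to `C - ∑ i, p i ^ 2`, which lies between
`C - 1` and `C - 1 / k`. Subadditivity of the square root turns the first bound into
`√(C - 1) ≤ G^m(p)`, and Cauchy–Schwarz turns the second into `G^m(p) ≤ √(k C - 1)`. Averaging over
the leaves with the weights `w l` (which sum to `1` and are at most `W`) gives the two bounds.
-/

open Finset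

namespace Real

variable {ι : Type*} (s : Finset ι) {f : ι → ℝ}

lemma sqrt_sum_le_sum_sqrt (hf : ∀ i ∈ s, 0 ≤ f i) : √(∑ i ∈ s, f i) ≤ ∑ i ∈ s, √(f i) := by
  refine sqrt_le_iff.2 ⟨sum_nonneg fun i _ => sqrt_nonneg _, ?_⟩
  calc ∑ i ∈ s, f i = ∑ i ∈ s, √(f i) ^ 2 := sum_congr rfl fun i hi => (sq_sqrt (hf i hi)).symm
    _ ≤ (∑ i ∈ s, √(f i)) ^ 2 := sum_sq_le_sq_sum_of_nonneg fun i _ => sqrt_nonneg _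

lemma sum_sqrt_le_sqrt_card_mul_sum (hf : ∀ i ∈ s, 0 ≤ f i) :
    ∑ i ∈ s, √(f i) ≤ √(#s * ∑ i ∈ s, f i) := by
  refine le_sqrt_of_sq_le ?_
  calc (∑ i ∈ s, √(f i)) ^ 2 ≤ #s * ∑ i ∈ s, √(f i) ^ 2 := sq_sum_le_card_mul_sum_sq
    _ = #s * ∑ i ∈ s, f i := by rw [sum_congr rfl fun i hi => sq_sqrt (hf i hi)]

end Real

section ProbabilityVector

variable {ι : Type*} [Fintype ι] {p : ι → ℝ} {C : ℝ}

lemma sum_sq_le_one_of_sum_eq_one (hp : ∀ i, 0 ≤ p i) (hps : ∑ i, p i = 1) :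
    ∑ i, p i ^ 2 ≤ 1 := by
  calc ∑ i, p i ^ 2 ≤ ∑ i, p i ^ 1 :=
        sum_le_sum fun i _ => pow_le_pow_of_le_one (hp i) (hps ▸ single_le_sum (fun j _ => hp j)
          (mem_univ i)) one_le_two
    _ = 1 := by simpa using hps

lemma one_le_card_mul_sum_sq_of_sum_eq_one (hps : ∑ i, p i = 1) :
    1 ≤ Fintype.card ι * ∑ i, p i ^ 2 := by
  simpa [hps] using sq_sum_le_card_mul_sum_sq (s := univ) (f := p)

lemma mul_sub_self_nonneg_of_sum_eq_one (hC : 1 ≤ C) (hp : ∀ i, 0 ≤ p i)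
    (hps : ∑ i, p i = 1) (i : ι) : 0 ≤ p i * (C - p i) := by
  have : p i ≤ 1 := hps ▸ single_le_sum (fun j _ => hp j) (mem_univ i)
  exact mul_nonneg (hp i) (by linarith)

lemma sum_mul_sub_self_of_sum_eq_one (hps : ∑ i, p i = 1) :
    ∑ i, p i * (C - p i) = C - ∑ i, p i ^ 2 := by
  simp only [mul_sub, sum_sub_distrib, ← mul_sum, mul_comm (p _) C, sq, hps, mul_one]

/-- The modified Gini-entropy `G^m(p)`. -/
noncomputable def modifiedGini (C : ℝ) (p : ι → ℝ) : ℝ := ∑ i, √(p i * (C - p i))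

lemma modifiedGini_nonneg : 0 ≤ modifiedGini C p :=
  sum_nonneg fun _ _ => Real.sqrt_nonneg _

lemma sqrt_sub_one_le_modifiedGini (hC : 1 ≤ C) (hp : ∀ i, 0 ≤ p i) (hps : ∑ i, p i = 1) :
    √(C - 1) ≤ modifiedGini C p :=
  calc √(C - 1) ≤ √(∑ i, p i * (C - p i)) := by
        rw [sum_mul_sub_self_of_sum_eq_one hps]
        exact Real.sqrt_le_sqrt (by linarith [sum_sq_le_one_of_sum_eq_one hp hps])
    _ ≤ modifiedGini C p :=
        Real.sqrt_sum_le_sum_sqrt _ fun i _ => mul_sub_self_nonneg_of_sum_eq_one hC hp hps i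

lemma modifiedGini_le_sqrt_card_mul_sub_one (hC : 1 ≤ C) (hp : ∀ i, 0 ≤ p i)
    (hps : ∑ i, p i = 1) : modifiedGini C p ≤ √(Fintype.card ι * C - 1) :=
  calc modifiedGini C p ≤ √(Fintype.card ι * ∑ i, p i * (C - p i)) :=
        Real.sum_sqrt_le_sqrt_card_mul_sum _ fun i _ => mul_sub_self_nonneg_of_sum_eq_one hC hp hps i
    _ ≤ √(Fintype.card ι * C - 1) := by
        rw [sum_mul_sub_self_of_sum_eq_one hps]
        exact Real.sqrt_le_sqrt (by linarith [one_le_card_mul_sum_sq_of_sum_eq_one hps])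

end ProbabilityVector

section WeightedSum

variable {ι : Type*} [Fintype ι] {w f : ι → ℝ}

lemma le_sum_mul_of_sum_eq_one {a : ℝ} (hw : ∀ l, 0 ≤ w l) (hws : ∑ l, w l = 1)
    (hf : ∀ l, a ≤ f l) : a ≤ ∑ l, w l * f l :=
  calc a = ∑ l, w l * a := by rw [← sum_mul, hws, one_mul]
    _ ≤ ∑ l, w l * f l := sum_le_sum fun l _ => mul_le_mul_of_nonneg_left (hf l) (hw l)

lemma sum_mul_le_card_mul_mul {W b : ℝ} (hw : ∀ l, 0 ≤ w l) (hW : ∀ l, w l ≤ W)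
    (hf₀ : ∀ l, 0 ≤ f l) (hf : ∀ l, f l ≤ b) : ∑ l, w l * f l ≤ Fintype.card ι * W * b :=
  calc ∑ l, w l * f l ≤ ∑ _l : ι, W * b :=
        sum_le_sum fun l _ => mul_le_mul (hW l) (hf l) (hf₀ l) ((hw l).trans (hW l))
    _ = Fintype.card ι * W * b := by rw [sum_const, card_univ, nsmul_eq_mul, mul_assoc]

end WeightedSum

theorem modified_gini_criterion_bounds_general (k t : ℕ)
    (C : ℝ) (hC : 2 < C)
    (w : Fin (t+1) → ℝ) (W : ℝ)
    (hw : ∀ l, 0 ≤ w l) (hws : ∑ l, w l = 1) (hW : ∀ l, w l ≤ W)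
    (π : Fin (t+1) → Fin k → ℝ)
    (hπ : ∀ l i, 0 ≤ π l i) (hπs : ∀ l, ∑ i, π l i = 1) :
    Real.sqrt (C - 1) ≤ ∑ l, w l * (∑ i, Real.sqrt (π l i * (C - π l i))) ∧
      ∑ l, w l * (∑ i, Real.sqrt (π l i * (C - π l i)))
        ≤ (t + 1 : ℝ) * W * Real.sqrt ((k : ℝ) * C - 1) := by
  have hC₁ : 1 ≤ C := by linarith
  refine ⟨le_sum_mul_of_sum_eq_one hw hws fun l => sqrt_sub_one_le_modifiedGini hC₁ (hπ l) (hπs l),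
    ?_⟩
  have := sum_mul_le_card_mul_mul hw hW (fun _ => modifiedGini_nonneg)
    fun l => modifiedGini_le_sqrt_card_mul_sub_one hC₁ (hπ l) (hπs l)
  simpa [modifiedGini] using this

/-- Lemma 8: bounds on the weighted leaf modified Gini-entropy `G_t^m`. -/
theorem modified_gini_criterion_bounds (k t : ℕ) (hk : 2 ≤ k) (ht : 1 ≤ t)
    (C : ℝ) (hC : 2 < C)
    (w : Fin (t+1) → ℝ) (W : ℝ)
    (hw : ∀ l, 0 ≤ w l) (hws : ∑ l, w l = 1) (hW : ∀ l, w l ≤ W)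
    (π : Fin (t+1) → Fin k → ℝ)
    (hπ : ∀ l i, 0 ≤ π l i) (hπs : ∀ l, ∑ i, π l i = 1) :
    Real.sqrt (C - 1) ≤ ∑ l, w l * (∑ i, Real.sqrt (π l i * (C - π l i))) ∧
      ∑ l, w l * (∑ i, Real.sqrt (π l i * (C - π l i)))
        ≤ (t + 1 : ℝ) * W * Real.sqrt ((k : ℝ) * C - 1) :=
  modified_gini_criterion_bounds_general k t C hC w W hw hws hW π hπ hπs
end

section
/- For any probability vectors p, q on Fin k and any θ ∈ [0,1], the Jensen gap of the Shannon entropy satisfies H((1-θ)•p + θ•q) - (1-θ)*H(p) - θ*H(q) ≥ (1/2) * θ * (1-θ) * (∑ i, |p i - q i|)^2. -/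
/-!
Along the segment `m(t) = (1 - t) p + t q` the entropy has second derivative
`-∑ i, (p i - q i) ^ 2 / m(t) i`, and since `m(t)` has total mass `1`, Cauchy–Schwarz bounds this
by `-(∑ i, |p i - q i|) ^ 2`. Hence `t ↦ H(m(t)) + (∑ i, |p i - q i|) ^ 2 / 2 * t ^ 2` is concave
on `[0, 1]`, and comparing it with its chord gives the inequality. Coordinates where `p` and `q`
both vanish contribute nothing and are discarded first, so that `m(t)` is positive for
`0 < t < 1`.
-/

open Finset Real Set

theorem le_sub_chord_of_hasDerivAt2_le_neg {f f' f'' : ℝ → ℝ} {c θ : ℝ}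
    (hf : ContinuousOn f (Icc 0 1))
    (hf' : ∀ t ∈ Ioo (0 : ℝ) 1, HasDerivAt f (f' t) t)
    (hf'' : ∀ t ∈ Ioo (0 : ℝ) 1, HasDerivAt f' (f'' t) t)
    (hf''c : ∀ t ∈ Ioo (0 : ℝ) 1, f'' t ≤ -c) (hθ0 : 0 ≤ θ) (hθ1 : θ ≤ 1) :
    c / 2 * θ * (1 - θ) ≤ f θ - (1 - θ) * f 0 - θ * f 1 := by
  have hconc : ConcaveOn ℝ (Icc 0 1) fun t ↦ f t + c / 2 * t ^ 2 := by
    refine concaveOn_of_hasDerivWithinAt2_nonpos (convex_Icc 0 1) (f' := fun t ↦ f' t + c * t)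
      (f'' := fun t ↦ f'' t + c) (hf.add (by fun_prop)) ?_ ?_ ?_ <;>
      rw [interior_Icc] <;> intro t ht
    · exact (((hf' t ht).add ((hasDerivAt_pow 2 t).const_mul (c / 2))).congr_deriv
        (by ring)).hasDerivWithinAt
    · exact ((hf'' t ht).add ((hasDerivAt_id t).const_mul c)).congr_deriv (by simp)
        |>.hasDerivWithinAt
    · linarith [hf''c t ht]
  have hchord := hconc.2 (left_mem_Icc.2 zero_le_one) (right_mem_Icc.2 zero_le_one)
    (sub_nonneg.2 hθ1) hθ0 (sub_add_cancel 1 θ)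
  simp only [smul_eq_mul, mul_zero, mul_one, zero_add] at hchord
  linear_combination hchord

theorem hasDerivAt_mix (a b t : ℝ) : HasDerivAt (fun s ↦ (1 - s) * a + s * b) (b - a) t :=
  ((((hasDerivAt_id t).const_sub 1).mul_const a).fun_add
    ((hasDerivAt_id t).mul_const b)).congr_deriv (by ring)

theorem hasDerivAt_negMulLog_mix {a b t : ℝ} (h : 0 < (1 - t) * a + t * b) :
    HasDerivAt (fun s ↦ negMulLog ((1 - s) * a + s * b))
      ((-log ((1 - t) * a + t * b) - 1) * (b - a)) t := by
  exact (hasDerivAt_negMulLog h.ne').comp t (hasDerivAt_mix a b t)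

theorem hasDerivAt_neg_log_mix_sub_one_mul {a b t : ℝ} (h : 0 < (1 - t) * a + t * b) :
    HasDerivAt (fun s ↦ (-log ((1 - s) * a + s * b) - 1) * (b - a))
      (-((a - b) ^ 2 / ((1 - t) * a + t * b))) t :=
  ((((hasDerivAt_mix a b t).log h.ne').fun_neg.sub_const 1).mul_const (b - a)).congr_deriv
    (by ring)

theorem mix_pos {a b t : ℝ} (ha : 0 ≤ a) (hb : 0 ≤ b) (hab : 0 < a + b)
    (ht : t ∈ Ioo (0 : ℝ) 1) : 0 < (1 - t) * a + t * b := by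
  obtain ⟨ht0, ht1⟩ := ht
  rcases ha.eq_or_lt with rfl | ha
  · rw [zero_add] at hab
    positivity
  · have := sub_pos.2 ht1
    positivity

section Simplex

variable {ι : Type*} (s : Finset ι) {p q : ι → ℝ}

theorem sum_mix (hps : ∑ i ∈ s, p i = 1) (hqs : ∑ i ∈ s, q i = 1) (t : ℝ) :
    ∑ i ∈ s, ((1 - t) * p i + t * q i) = 1 := by
  rw [sum_add_distrib, ← mul_sum, ← mul_sum, hps, hqs]
  ring

theorem sq_sum_abs_le_sum_sq_div (d : ι → ℝ) {m : ι → ℝ} (hm : ∀ i ∈ s, 0 < m i)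
    (hms : ∑ i ∈ s, m i = 1) : (∑ i ∈ s, |d i|) ^ 2 ≤ ∑ i ∈ s, d i ^ 2 / m i := by
  simpa [hms] using sq_sum_div_le_sum_sq_div s (fun i ↦ |d i|) hm

variable {θ : ℝ}

theorem le_sum_negMulLog_mix_sub_of_pos (hp : ∀ i ∈ s, 0 ≤ p i) (hq : ∀ i ∈ s, 0 ≤ q i)
    (hpq : ∀ i ∈ s, 0 < p i + q i) (hps : ∑ i ∈ s, p i = 1) (hqs : ∑ i ∈ s, q i = 1)
    (hθ0 : 0 ≤ θ) (hθ1 : θ ≤ 1) :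
    1 / 2 * θ * (1 - θ) * (∑ i ∈ s, |p i - q i|) ^ 2 ≤
      ∑ i ∈ s, negMulLog ((1 - θ) * p i + θ * q i) - (1 - θ) * ∑ i ∈ s, negMulLog (p i)
        - θ * ∑ i ∈ s, negMulLog (q i) := by
  have hm : ∀ t ∈ Ioo (0 : ℝ) 1, ∀ i ∈ s, 0 < (1 - t) * p i + t * q i :=
    fun t ht i hi ↦ mix_pos (hp i hi) (hq i hi) (hpq i hi) ht
  have key := le_sub_chord_of_hasDerivAt2_le_neg (c := (∑ i ∈ s, |p i - q i|) ^ 2)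
    (f := fun t ↦ ∑ i ∈ s, negMulLog ((1 - t) * p i + t * q i)) (by fun_prop)
    (fun t ht ↦ HasDerivAt.fun_sum fun i hi ↦ hasDerivAt_negMulLog_mix (hm t ht i hi))
    (fun t ht ↦ HasDerivAt.fun_sum fun i hi ↦ hasDerivAt_neg_log_mix_sub_one_mul (hm t ht i hi))
    (fun t ht ↦ by
      rw [sum_neg_distrib, neg_le_neg_iff]
      exact sq_sum_abs_le_sum_sq_div s _ (hm t ht) (sum_mix s hps hqs t))
    hθ0 hθ1
  simp only [sub_zero, one_mul, zero_mul, add_zero, sub_self, zero_add] at key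
  linarith

theorem le_sum_negMulLog_mix_sub (hp : ∀ i ∈ s, 0 ≤ p i) (hq : ∀ i ∈ s, 0 ≤ q i)
    (hps : ∑ i ∈ s, p i = 1) (hqs : ∑ i ∈ s, q i = 1) (hθ0 : 0 ≤ θ) (hθ1 : θ ≤ 1) :
    1 / 2 * θ * (1 - θ) * (∑ i ∈ s, |p i - q i|) ^ 2 ≤
      ∑ i ∈ s, negMulLog ((1 - θ) * p i + θ * q i) - (1 - θ) * ∑ i ∈ s, negMulLog (p i)
        - θ * ∑ i ∈ s, negMulLog (q i) := by
  classical
  have hsupp (f : ℝ → ℝ → ℝ) (hf : f 0 0 = 0) :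
      ∑ i ∈ s with 0 < p i + q i, f (p i) (q i) = ∑ i ∈ s, f (p i) (q i) := by
    refine sum_filter_of_ne fun i hi hfi ↦ ?_
    by_contra hpq
    obtain ⟨hpi, hqi⟩ : p i = 0 ∧ q i = 0 := by
      constructor <;> linarith [hp i hi, hq i hi, not_lt.1 hpq]
    exact hfi (by rw [hpi, hqi, hf])
  have hgap := le_sum_negMulLog_mix_sub_of_pos (s.filter fun i ↦ 0 < p i + q i) (θ := θ)
    (fun i hi ↦ hp i (mem_filter.1 hi).1) (fun i hi ↦ hq i (mem_filter.1 hi).1)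
    (fun i hi ↦ (mem_filter.1 hi).2) (by rwa [hsupp (fun a _ ↦ a) rfl])
    (by rwa [hsupp (fun _ b ↦ b) rfl]) hθ0 hθ1
  rwa [hsupp (fun a b ↦ |a - b|) (by simp), hsupp (fun a _ ↦ negMulLog a) negMulLog_zero,
    hsupp (fun _ b ↦ negMulLog b) negMulLog_zero,
    hsupp (fun a b ↦ negMulLog ((1 - θ) * a + θ * b)) (by simp)] at hgap

end Simplex

theorem entropy_strong_concavity_general (k : ℕ)
    (p q : Fin k → ℝ) (θ : ℝ)
    (hp : ∀ i, 0 ≤ p i) (hps : ∑ i, p i = 1)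
    (hq : ∀ i, 0 ≤ q i) (hqs : ∑ i, q i = 1)
    (hθ0 : 0 ≤ θ) (hθ1 : θ ≤ 1) :
    (∑ i, ((1 - θ) * p i + θ * q i) * Real.log (1 / ((1 - θ) * p i + θ * q i)))
        - (1 - θ) * (∑ i, p i * Real.log (1 / p i))
        - θ * (∑ i, q i * Real.log (1 / q i))
      ≥ (1/2) * θ * (1 - θ) * (∑ i, |p i - q i|)^2 := by
  have hentropy (x : ℝ) : x * log (1 / x) = negMulLog x := by
    rw [one_div, log_inv, negMulLog]
    ring
  simp only [hentropy]
  exact le_sum_negMulLog_mix_sub univ (fun i _ ↦ hp i) (fun i _ ↦ hq i) hps hqs hθ0 hθ1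

/-- Lemma 9: the Shannon entropy is strongly concave w.r.t. the `l1`-norm with modulus 1. -/
theorem entropy_strong_concavity (k : ℕ) (hk : 2 ≤ k)
    (p q : Fin k → ℝ) (θ : ℝ)
    (hp : ∀ i, 0 ≤ p i) (hps : ∑ i, p i = 1)
    (hq : ∀ i, 0 ≤ q i) (hqs : ∑ i, q i = 1)
    (hθ0 : 0 ≤ θ) (hθ1 : θ ≤ 1) :
    (∑ i, ((1 - θ) * p i + θ * q i) * Real.log (1 / ((1 - θ) * p i + θ * q i)))
        - (1 - θ) * (∑ i, p i * Real.log (1 / p i))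
        - θ * (∑ i, q i * Real.log (1 / q i))
      ≥ (1/2) * θ * (1 - θ) * (∑ i, |p i - q i|)^2 :=
  entropy_strong_concavity_general k p q θ hp hps hq hqs hθ0 hθ1
end

section
/- For any constant C > 2, any probability vectors p, q on Fin k and any θ ∈ [0,1], the Jensen gap of the modified Gini-entropy satisfies G^m((1-θ)•p + θ•q) - (1-θ)*G^m(p) - θ*G^m(q) ≥ ((C-2)^2 / C^3) * θ * (1-θ) * ∑ i, (p i - q i)^2. -/
/-!
Write `f y = √(y (C - y))` and `x = (1 - θ) a + θ b`. The quadratic `y (C - y)` satisfies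
`x (C - x) = (1 - θ) a (C - a) + θ b (C - b) + θ (1 - θ) (a - b)²`, so with `L = (1 - θ) f a + θ f b`
convexity of the square gives `f x ² ≥ L² + θ (1 - θ) (a - b)²`. Since `f ≤ C / 2`, we get
`f x - L ≥ (f x ² - L²) / C ≥ θ (1 - θ) (a - b)² / C`, and `(C - 2)² / C³ ≤ 1 / C`.
Summing over the coordinates, each of which lies in `[0, 1]`, gives the theorem.
-/

open Finset

lemma le_one_of_sum_eq_one {ι : Type*} [Fintype ι] {p : ι → ℝ} (hp : ∀ i, 0 ≤ p i)
    (hps : ∑ i, p i = 1) (i : ι) : p i ≤ 1 :=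
  hps ▸ single_le_sum (fun j _ => hp j) (mem_univ i)

lemma Real.sqrt_mul_sub_le_half {C : ℝ} (hC : 0 ≤ C) (y : ℝ) : √(y * (C - y)) ≤ C / 2 :=
  (Real.sqrt_le_left (by linarith)).2 (by nlinarith [sq_nonneg (y - C / 2)])

lemma sq_convex_combination_le {θ : ℝ} (hθ0 : 0 ≤ θ) (hθ1 : θ ≤ 1) (u v : ℝ) :
    ((1 - θ) * u + θ * v) ^ 2 ≤ (1 - θ) * u ^ 2 + θ * v ^ 2 := by
  have hgap : (1 - θ) * u ^ 2 + θ * v ^ 2 - ((1 - θ) * u + θ * v) ^ 2 = θ * (1 - θ) * (u - v) ^ 2 := by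
    ring
  linarith [mul_nonneg (mul_nonneg hθ0 (sub_nonneg.2 hθ1)) (sq_nonneg (u - v))]

lemma div_le_sub_of_sq_add_le_sq {C L w s : ℝ} (hC : 0 < C) (hL : 0 ≤ L) (hw : 0 ≤ w)
    (hwL : w + L ≤ C) (hs : 0 ≤ s) (h : L ^ 2 + s ≤ w ^ 2) : s / C ≤ w - L := by
  have hLw : L ≤ w := (pow_le_pow_iff_left₀ hL hw two_ne_zero).1 (by linarith)
  rw [div_le_iff₀ hC]
  nlinarith

lemma mul_sub_convex_combination (C a b θ : ℝ) :
    ((1 - θ) * a + θ * b) * (C - ((1 - θ) * a + θ * b))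
      = (1 - θ) * (a * (C - a)) + θ * (b * (C - b)) + θ * (1 - θ) * (a - b) ^ 2 := by
  ring

lemma sqrt_mul_sub_jensen_gap {C a b θ : ℝ} (hC : 0 < C) (ha0 : 0 ≤ a) (haC : a ≤ C)
    (hb0 : 0 ≤ b) (hbC : b ≤ C) (hθ0 : 0 ≤ θ) (hθ1 : θ ≤ 1) :
    θ * (1 - θ) * (a - b) ^ 2 / C ≤
      √(((1 - θ) * a + θ * b) * (C - ((1 - θ) * a + θ * b)))
        - (1 - θ) * √(a * (C - a)) - θ * √(b * (C - b)) := by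
  set u := √(a * (C - a))
  set v := √(b * (C - b))
  set w := √(((1 - θ) * a + θ * b) * (C - ((1 - θ) * a + θ * b)))
  have hθ1' : 0 ≤ 1 - θ := sub_nonneg.2 hθ1
  have hs : 0 ≤ θ * (1 - θ) * (a - b) ^ 2 := by positivity
  have hu : u ^ 2 = a * (C - a) := Real.sq_sqrt (mul_nonneg ha0 (sub_nonneg.2 haC))
  have hv : v ^ 2 = b * (C - b) := Real.sq_sqrt (mul_nonneg hb0 (sub_nonneg.2 hbC))
  have hw : w ^ 2 = (1 - θ) * u ^ 2 + θ * v ^ 2 + θ * (1 - θ) * (a - b) ^ 2 := by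
    rw [hu, hv, ← mul_sub_convex_combination]
    refine Real.sq_sqrt ?_
    rw [mul_sub_convex_combination, ← hu, ← hv]
    positivity
  have hL : (1 - θ) * u + θ * v ≤ C / 2 := by
    nlinarith [Real.sqrt_mul_sub_le_half hC.le a, Real.sqrt_mul_sub_le_half hC.le b]
  have hwC : w ≤ C / 2 := Real.sqrt_mul_sub_le_half hC.le _
  have key := div_le_sub_of_sq_add_le_sq (L := (1 - θ) * u + θ * v) (w := w) hC (by positivity)
    (Real.sqrt_nonneg _) (by linarith) hs (by linarith [sq_convex_combination_le hθ0 hθ1 u v])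
  linarith

theorem modified_gini_strong_concavity_general (k : ℕ)
    (C : ℝ) (hC : 2 < C)
    (p q : Fin k → ℝ) (θ : ℝ)
    (hp : ∀ i, 0 ≤ p i) (hps : ∑ i, p i = 1)
    (hq : ∀ i, 0 ≤ q i) (hqs : ∑ i, q i = 1)
    (hθ0 : 0 ≤ θ) (hθ1 : θ ≤ 1) :
    (∑ i, Real.sqrt (((1 - θ) * p i + θ * q i) * (C - ((1 - θ) * p i + θ * q i))))
        - (1 - θ) * (∑ i, Real.sqrt (p i * (C - p i)))
        - θ * (∑ i, Real.sqrt (q i * (C - q i)))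
      ≥ ((C - 2)^2 / C^3) * θ * (1 - θ) * ∑ i, (p i - q i)^2 := by
  have hC0 : 0 < C := by linarith
  have hmodulus : (C - 2) ^ 2 / C ^ 3 ≤ 1 / C := by
    rw [div_le_div_iff₀ (by positivity) hC0]
    nlinarith
  rw [ge_iff_le, mul_sum, mul_sum, mul_sum, ← sum_sub_distrib, ← sum_sub_distrib]
  refine sum_le_sum fun i _ => le_trans ?_ (sqrt_mul_sub_jensen_gap hC0 (hp i)
    ((le_one_of_sum_eq_one hp hps i).trans (by linarith)) (hq i)
    ((le_one_of_sum_eq_one hq hqs i).trans (by linarith)) hθ0 hθ1)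
  calc (C - 2) ^ 2 / C ^ 3 * θ * (1 - θ) * (p i - q i) ^ 2
      = (C - 2) ^ 2 / C ^ 3 * (θ * (1 - θ) * (p i - q i) ^ 2) := by ring
    _ ≤ 1 / C * (θ * (1 - θ) * (p i - q i) ^ 2) := by gcongr
    _ = θ * (1 - θ) * (p i - q i) ^ 2 / C := by ring

/-- Lemma 13: the modified Gini-entropy is strongly concave w.r.t. the `l2`-norm
with modulus `2(C-2)^2/C^3`. -/
theorem modified_gini_strong_concavity (k : ℕ) (hk : 2 ≤ k)
    (C : ℝ) (hC : 2 < C)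
    (p q : Fin k → ℝ) (θ : ℝ)
    (hp : ∀ i, 0 ≤ p i) (hps : ∑ i, p i = 1)
    (hq : ∀ i, 0 ≤ q i) (hqs : ∑ i, q i = 1)
    (hθ0 : 0 ≤ θ) (hθ1 : θ ≤ 1) :
    (∑ i, Real.sqrt (((1 - θ) * p i + θ * q i) * (C - ((1 - θ) * p i + θ * q i))))
        - (1 - θ) * (∑ i, Real.sqrt (p i * (C - p i)))
        - θ * (∑ i, Real.sqrt (q i * (C - q i)))
      ≥ ((C - 2)^2 / C^3) * θ * (1 - θ) * ∑ i, (p i - q i)^2 :=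
  modified_gini_strong_concavity_general k C hC p q θ hp hps hq hqs hθ0 hθ1
end

section
/- For any node split with 0 < β < 1, the entropy reduction of the split satisfies H(π) - (1-β)*H(π₀) - β*H(π₁) ≥ J^2 / (8 * β * (1 - β)). -/
/-!
The entropy reduction is the `π`-average of the binary divergences `KL(Ber (P i) ‖ Ber β)`, each
of which splits as `β * klFun (P i / β) + (1 - β) * klFun ((1 - P i) / (1 - β))`. The bound
`klFun t ≥ 3 (t - 1)² / (2 (t + 2))`, sharper than Pinsker near `t = 1`, turns `y * klFun (x / y)`
into `3 (x - y)² / (2 (x + 2 y))`. Cauchy–Schwarz with weights `x i + 2 y`, whose `π`-mean is `3 y`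
because `y` is the `π`-mean of `x`, bounds each half below by `(J / 2)² / (2 y)`, and
`1 / (2 β) + 1 / (2 (1 - β)) = 1 / (2 β (1 - β))`.
-/

open InformationTheory Finset

section

open Real

lemma hasDerivAt_log_sub_div {t : ℝ} (ht : 0 < t) :
    HasDerivAt (fun t => log t - (t - 1) * (5 * t + 1) / (2 * t * (t + 2)))
      ((t - 1) ^ 3 / (t ^ 2 * (t + 2) ^ 2)) t := by
  have hnum : HasDerivAt (fun t : ℝ => (t - 1) * (5 * t + 1)) (10 * t - 4) t := by
    refine (((hasDerivAt_id t).sub_const 1).mul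
      (((hasDerivAt_id t).const_mul 5).add_const 1)).congr_deriv ?_
    simp only [id_eq]; ring
  have hden : HasDerivAt (fun t : ℝ => 2 * t * (t + 2)) (4 * t + 4) t := by
    refine (((hasDerivAt_id t).const_mul 2).mul ((hasDerivAt_id t).add_const 2)).congr_deriv ?_
    simp only [id_eq]; ring
  refine ((hasDerivAt_log ht.ne').sub (hnum.div hden (by positivity))).congr_deriv ?_
  field_simp
  ring

lemma sub_one_mul_five_mul_add_one_div_le_log {t : ℝ} (ht : 0 < t) :
    (t - 1) * (5 * t + 1) / (2 * t * (t + 2)) ≤ log t := by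
  set f := fun t : ℝ => log t - (t - 1) * (5 * t + 1) / (2 * t * (t + 2))
  suffices f 1 ≤ f t by simpa [f] using this
  have hf : ∀ x, 0 < x → HasDerivAt f ((x - 1) ^ 3 / (x ^ 2 * (x + 2) ^ 2)) x :=
    fun x hx => hasDerivAt_log_sub_div hx
  rcases le_total t 1 with h | h
  · refine antitoneOn_of_hasDerivWithinAt_nonpos (convex_Ioc 0 1)
      (fun x hx => (hf x hx.1).continuousAt.continuousWithinAt)
      (fun x hx => (hf x (interior_subset hx).1).hasDerivWithinAt) (fun x hx => ?_)
      ⟨ht, h⟩ ⟨one_pos, le_rfl⟩ h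
    rw [interior_Ioc] at hx
    exact div_nonpos_of_nonpos_of_nonneg (Odd.pow_nonpos (by decide) (by linarith [hx.2]))
      (by positivity)
  · refine monotoneOn_of_hasDerivWithinAt_nonneg (convex_Ici 1)
      (fun x hx => (hf x (one_pos.trans_le hx)).continuousAt.continuousWithinAt)
      (fun x hx => (hf x (one_pos.trans_le (interior_subset hx))).hasDerivWithinAt)
      (fun x hx => ?_) Set.self_mem_Ici h h
    rw [interior_Ici] at hx
    exact div_nonneg (pow_nonneg (by linarith [hx.out]) _) (by positivity)

lemma three_mul_sq_div_le_klFun {t : ℝ} (ht : 0 ≤ t) :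
    3 * (t - 1) ^ 2 / (2 * (t + 2)) ≤ klFun t := by
  rcases ht.eq_or_lt with rfl | ht
  · norm_num [klFun_zero]
  have hgap : klFun t - 3 * (t - 1) ^ 2 / (2 * (t + 2))
      = t * (log t - (t - 1) * (5 * t + 1) / (2 * t * (t + 2))) := by
    rw [klFun_apply]; field_simp; ring
  have := mul_nonneg ht.le (sub_nonneg.2 (sub_one_mul_five_mul_add_one_div_le_log ht))
  linarith

lemma three_mul_sq_div_le_mul_klFun_div {x y : ℝ} (hx : 0 ≤ x) (hy : 0 < y) :
    3 * (x - y) ^ 2 / (2 * (x + 2 * y)) ≤ y * klFun (x / y) := by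
  calc 3 * (x - y) ^ 2 / (2 * (x + 2 * y)) = y * (3 * (x / y - 1) ^ 2 / (2 * (x / y + 2))) := by
        field_simp
    _ ≤ _ := mul_le_mul_of_nonneg_left (three_mul_sq_div_le_klFun (div_nonneg hx hy.le)) hy.le

lemma sq_sum_mul_le_sum_mul_sq_div_mul_sum_mul {ι : Type*} (s : Finset ι) {w b : ι → ℝ}
    (d : ι → ℝ) (hw : ∀ i ∈ s, 0 ≤ w i) (hb : ∀ i ∈ s, 0 < b i) :
    (∑ i ∈ s, w i * d i) ^ 2 ≤ (∑ i ∈ s, w i * d i ^ 2 / b i) * ∑ i ∈ s, w i * b i :=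
  sum_sq_le_sum_mul_sum_of_sq_le_mul s
    (fun i hi => div_nonneg (mul_nonneg (hw i hi) (sq_nonneg _)) (hb i hi).le)
    (fun i hi => mul_nonneg (hw i hi) (hb i hi).le)
    (fun i hi => by field_simp [(hb i hi).ne']; rfl)

lemma sq_sum_mul_abs_sub_div_le_sum_mul_klFun {ι : Type*} (s : Finset ι) {w x : ι → ℝ} {y : ℝ}
    (hw : ∀ i ∈ s, 0 ≤ w i) (hws : ∑ i ∈ s, w i = 1) (hx : ∀ i ∈ s, 0 ≤ x i) (hy : 0 < y)
    (hmean : ∑ i ∈ s, w i * x i = y) :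
    (∑ i ∈ s, w i * |x i - y|) ^ 2 / (2 * y) ≤ ∑ i ∈ s, w i * (y * klFun (x i / y)) := by
  have hb : ∀ i ∈ s, 0 < x i + 2 * y := fun i hi => by linarith [hx i hi]
  have hbs : ∑ i ∈ s, w i * (x i + 2 * y) = 3 * y := by
    simp only [mul_add, sum_add_distrib, hmean, ← sum_mul, hws]; ring
  have hcs := sq_sum_mul_le_sum_mul_sq_div_mul_sum_mul s (fun i => |x i - y|) hw hb
  simp only [sq_abs, hbs] at hcs
  calc (∑ i ∈ s, w i * |x i - y|) ^ 2 / (2 * y)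
      ≤ 3 / 2 * ∑ i ∈ s, w i * (x i - y) ^ 2 / (x i + 2 * y) := by
        rw [div_le_iff₀ (by positivity)]; linarith
    _ = ∑ i ∈ s, w i * (3 * (x i - y) ^ 2 / (2 * (x i + 2 * y))) := by
        rw [mul_sum]
        refine sum_congr rfl fun i hi => ?_
        field_simp [(hb i hi).ne']
    _ ≤ _ := sum_le_sum fun i hi =>
        mul_le_mul_of_nonneg_left (three_mul_sq_div_le_mul_klFun_div (hx i hi) hy) (hw i hi)

lemma mul_negMulLog_mul_div (q r : ℝ) {a : ℝ} (ha : a ≠ 0) :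
    a * negMulLog (q * r / a) = r * negMulLog q + q * (a - r) - q * (a * klFun (r / a)) := by
  rw [mul_div_assoc, negMulLog_mul, negMulLog, negMulLog, klFun_apply]
  field_simp
  ring

lemma negMulLog_sub_mul_negMulLog_sub_mul_negMulLog (q p : ℝ) {β : ℝ} (hβ₀ : β ≠ 0)
    (hβ₁ : 1 - β ≠ 0) :
    negMulLog q - (1 - β) * negMulLog (q * (1 - p) / (1 - β)) - β * negMulLog (q * p / β)
      = q * (β * klFun (p / β)) + q * ((1 - β) * klFun ((1 - p) / (1 - β))) := by
  rw [mul_negMulLog_mul_div _ _ hβ₀, mul_negMulLog_mul_div _ _ hβ₁]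
  ring

lemma mul_log_one_div (x : ℝ) : x * log (1 / x) = negMulLog x := by
  rw [one_div, log_inv, negMulLog]
  ring

end

theorem entropy_reduction_ge_general (k : ℕ)
    (π P : Fin k → ℝ) (β J : ℝ) (π₀ π₁ : Fin k → ℝ)
    (hπ : ∀ i, 0 ≤ π i) (hπs : ∑ i, π i = 1)
    (hP0 : ∀ i, 0 ≤ P i) (hP1 : ∀ i, P i ≤ 1)
    (hβ : β = ∑ i, π i * P i)
    (hJ : J = 2 * ∑ i, π i * |β - P i|)
    (hβ0 : 0 < β) (hβ1 : β < 1)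
    (hπ₀ : ∀ i, π₀ i = π i * (1 - P i) / (1 - β))
    (hπ₁ : ∀ i, π₁ i = π i * P i / β) :
    (∑ i, π i * Real.log (1 / π i))
        - (1 - β) * (∑ i, π₀ i * Real.log (1 / π₀ i))
        - β * (∑ i, π₁ i * Real.log (1 / π₁ i))
      ≥ J^2 / (8 * β * (1 - β)) := by
  have hβ1' : 0 < 1 - β := sub_pos.2 hβ1
  have hsplit : (∑ i, π i * Real.log (1 / π i)) - (1 - β) * (∑ i, π₀ i * Real.log (1 / π₀ i))
        - β * (∑ i, π₁ i * Real.log (1 / π₁ i))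
      = ∑ i, π i * (β * klFun (P i / β)) + ∑ i, π i * ((1 - β) * klFun ((1 - P i) / (1 - β))) := by
    simp only [mul_log_one_div, hπ₀, hπ₁, mul_sum, ← sum_add_distrib, ← sum_sub_distrib]
    exact sum_congr rfl fun i _ =>
      negMulLog_sub_mul_negMulLog_sub_mul_negMulLog _ _ hβ0.ne' hβ1'.ne'
  have h₁ := sq_sum_mul_abs_sub_div_le_sum_mul_klFun univ (fun i _ => hπ i) hπs
    (fun i _ => hP0 i) hβ0 hβ.symm
  have h₀ := sq_sum_mul_abs_sub_div_le_sum_mul_klFun univ (x := fun i => 1 - P i)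
    (fun i _ => hπ i) hπs (fun i _ => sub_nonneg.2 (hP1 i)) hβ1'
    (by simp only [mul_sub, mul_one, sum_sub_distrib, hπs, hβ])
  simp only [sub_sub_sub_cancel_left] at h₀
  simp only [abs_sub_comm (P _)] at h₁
  rw [hsplit, ge_iff_le, hJ]
  calc (2 * ∑ i, π i * |β - P i|) ^ 2 / (8 * β * (1 - β))
      = (∑ i, π i * |β - P i|) ^ 2 / (2 * β) + (∑ i, π i * |β - P i|) ^ 2 / (2 * (1 - β)) := by
        field_simp; ring
    _ ≤ _ := add_le_add h₁ h₀

/-- Equation (8), first line: the entropy reduction of a split is at least `J²/(8β(1-β))`. -/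
theorem entropy_reduction_ge (k : ℕ) (hk : 2 ≤ k)
    (π P : Fin k → ℝ) (β J : ℝ) (π₀ π₁ : Fin k → ℝ)
    (hπ : ∀ i, 0 ≤ π i) (hπs : ∑ i, π i = 1)
    (hP0 : ∀ i, 0 ≤ P i) (hP1 : ∀ i, P i ≤ 1)
    (hβ : β = ∑ i, π i * P i)
    (hJ : J = 2 * ∑ i, π i * |β - P i|)
    (hβ0 : 0 < β) (hβ1 : β < 1)
    (hπ₀ : ∀ i, π₀ i = π i * (1 - P i) / (1 - β))
    (hπ₁ : ∀ i, π₁ i = π i * P i / β) :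
    (∑ i, π i * Real.log (1 / π i))
        - (1 - β) * (∑ i, π₀ i * Real.log (1 / π₀ i))
        - β * (∑ i, π₁ i * Real.log (1 / π₁ i))
      ≥ J^2 / (8 * β * (1 - β)) :=
  entropy_reduction_ge_general k π P β J π₀ π₁ hπ hπs hP0 hP1 hβ hJ hβ0 hβ1 hπ₀ hπ₁
end

section
/- Let γ ∈ (0, 1/2]. For any node split satisfying the weak hypothesis assumption, i.e. γ ≤ β ≤ 1 - γ and J ≥ 2γ, the Gini-entropy reduction of the split satisfies G^g(π) - (1-β)*G^g(π₀) - β*G^g(π₁) ≥ γ^2 / ((1 - γ)^2 * k). -/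
/-!
Splitting a node is exact class by class: the linear parts of `p (1 - p)` cancel between the
parent and the two children, and what remains of the quadratic part is
`(π i (β - P i))² / (β (1 - β))`. Summing over the classes, Cauchy–Schwarz turns the weak
hypothesis `∑ i, π i |β - P i| = J / 2 ≥ γ` into `∑ i, (π i (β - P i))² ≥ γ² / k`, and
`β (1 - β) ≤ (1 - γ)²` whenever `γ ≤ β ≤ 1 - γ`.
-/

open Finset

noncomputable def gini {ι : Type*} [Fintype ι] (p : ι → ℝ) : ℝ := ∑ i, p i * (1 - p i)

lemma gini_term_sub_split {p q w : ℝ} (hw : w ≠ 0) (hw' : 1 - w ≠ 0) :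
    p * (1 - p) - (1 - w) * (p * (1 - q) / (1 - w) * (1 - p * (1 - q) / (1 - w)))
      - w * (p * q / w * (1 - p * q / w)) = (p * (w - q)) ^ 2 / (w * (1 - w)) := by
  field_simp
  ring

theorem gini_sub_split_eq {ι : Type*} [Fintype ι] (π P π₀ π₁ : ι → ℝ) {β : ℝ}
    (hβ : β ≠ 0) (hβ' : 1 - β ≠ 0)
    (hπ₀ : ∀ i, π₀ i = π i * (1 - P i) / (1 - β)) (hπ₁ : ∀ i, π₁ i = π i * P i / β) :
    gini π - (1 - β) * gini π₀ - β * gini π₁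
      = (∑ i, (π i * (β - P i)) ^ 2) / (β * (1 - β)) := by
  simp only [gini, mul_sum, sum_div, ← sum_sub_distrib, hπ₀, hπ₁]
  exact sum_congr rfl fun i _ ↦ gini_term_sub_split hβ hβ'

lemma sq_div_card_le_sum_sq {ι : Type*} [Fintype ι] {c : ℝ} (hc : 0 ≤ c) (x : ι → ℝ)
    (h : c ≤ ∑ i, x i) : c ^ 2 / Fintype.card ι ≤ ∑ i, x i ^ 2 := by
  rcases (Fintype.card ι).eq_zero_or_pos with hι | hι
  · simp only [hι, Nat.cast_zero, div_zero]
    positivity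
  rw [div_le_iff₀' (by exact_mod_cast hι)]
  calc c ^ 2 ≤ (∑ i, x i) ^ 2 := pow_le_pow_left₀ hc h 2
    _ ≤ Fintype.card ι * ∑ i, x i ^ 2 := by
      simpa only [card_univ] using sq_sum_le_card_mul_sum_sq (s := univ) (f := x)

lemma mul_one_sub_le_one_sub_sq {β γ : ℝ} (hlo : γ ≤ β) (hhi : β ≤ 1 - γ) :
    β * (1 - β) ≤ (1 - γ) ^ 2 := by
  nlinarith

theorem gini_reduction_weak_hyp_general (k : ℕ)
    (γ : ℝ) (hγ0 : 0 < γ)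
    (π P : Fin k → ℝ) (β J : ℝ) (π₀ π₁ : Fin k → ℝ)
    (hJ : J = 2 * ∑ i, π i * |β - P i|)
    (hβlo : γ ≤ β) (hβhi : β ≤ 1 - γ) (hJγ : 2 * γ ≤ J)
    (hπ₀ : ∀ i, π₀ i = π i * (1 - P i) / (1 - β))
    (hπ₁ : ∀ i, π₁ i = π i * P i / β) :
    (∑ i, π i * (1 - π i))
        - (1 - β) * (∑ i, π₀ i * (1 - π₀ i))
        - β * (∑ i, π₁ i * (1 - π₁ i))
      ≥ γ^2 / ((1 - γ)^2 * k) := by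
  have hβ0 : 0 < β := hγ0.trans_le hβlo
  have hβ1 : 0 < 1 - β := by linarith
  have hS : γ ^ 2 / k ≤ ∑ i, (π i * (β - P i)) ^ 2 := by
    have h := sq_div_card_le_sum_sq hγ0.le (fun i ↦ π i * |β - P i|) (by linarith)
    simpa only [Fintype.card_fin, mul_pow, sq_abs] using h
  change gini π - (1 - β) * gini π₀ - β * gini π₁ ≥ _
  rw [gini_sub_split_eq π P π₀ π₁ hβ0.ne' hβ1.ne' hπ₀ hπ₁, ge_iff_le, mul_comm, ← div_div]
  exact div_le_div₀ (by positivity) hS (by positivity) (mul_one_sub_le_one_sub_sq hβlo hβhi)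

/-- Under the weak hypothesis assumption the Gini-entropy reduction
of a split is at least `γ²/((1-γ)² k)`. -/
theorem gini_reduction_weak_hyp (k : ℕ) (hk : 2 ≤ k)
    (γ : ℝ) (hγ0 : 0 < γ) (hγhalf : γ ≤ 1/2)
    (π P : Fin k → ℝ) (β J : ℝ) (π₀ π₁ : Fin k → ℝ)
    (hπ : ∀ i, 0 ≤ π i) (hπs : ∑ i, π i = 1)
    (hP0 : ∀ i, 0 ≤ P i) (hP1 : ∀ i, P i ≤ 1)
    (hβ : β = ∑ i, π i * P i)
    (hJ : J = 2 * ∑ i, π i * |β - P i|)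
    (hβlo : γ ≤ β) (hβhi : β ≤ 1 - γ) (hJγ : 2 * γ ≤ J)
    (hπ₀ : ∀ i, π₀ i = π i * (1 - P i) / (1 - β))
    (hπ₁ : ∀ i, π₁ i = π i * P i / β) :
    (∑ i, π i * (1 - π i))
        - (1 - β) * (∑ i, π₀ i * (1 - π₀ i))
        - β * (∑ i, π₁ i * (1 - π₁ i))
      ≥ γ^2 / ((1 - γ)^2 * k) :=
  gini_reduction_weak_hyp_general k γ hγ0 π P β J π₀ π₁ hJ hβlo hβhi hJγ hπ₀ hπ₁
end

section
/- Let γ ∈ (0, 1/2] and C > 2. For any node split satisfying the weak hypothesis assumption, i.e. γ ≤ β ≤ 1 - γ and J ≥ 2γ, the modified Gini-entropy reduction of the split satisfies G^m(π) - (1-β)*G^m(π₀) - β*G^m(π₁) ≥ ((C-2)^2 * γ^2) / (C^3 * k * (1 - γ)^2). -/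
/-!
Write `g(x) = √(x (C - x))`. Coordinatewise, the concavity gap of `g` is controlled by
Lagrange's identity: with `u = √(b (C - a))`, `v = √(a (C - b))` one has
`g(t b + (1 - t) a)² - (t g(b) + (1 - t) g(a))² = t (1 - t) (u - v)²` and
`(u - v)(u + v) = C (b - a)`, so the gap is at least `√C/8 · t (1 - t) (b - a)²`.
For a split, `π₁ i - π₀ i = π i (P i - β) / (β (1 - β))`, so summing over the classes bounds
the Gini reduction below by `√C/8 · ∑ (π i |β - P i|)² / (β (1 - β))`; Cauchy–Schwarz and
`∑ π i |β - P i| = J / 2 ≥ γ` bound the sum by `γ² / k`, and `β (1 - β) ≤ (1 - γ)²`.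
-/

open Finset

noncomputable section

variable {ι : Type*} [Fintype ι]

def sqrtGini (C x : ℝ) : ℝ := √(x * (C - x))

def modGini (C : ℝ) (p : ι → ℝ) : ℝ := ∑ i, sqrtGini C (p i)

end

lemma sq_sub_sq_div_le_sub {x y M : ℝ} (hy : 0 ≤ y) (hyx : y ≤ x) (hM : x + y ≤ M) :
    (x ^ 2 - y ^ 2) / M ≤ x - y :=
  div_le_of_le_mul₀ (by linarith) (by linarith) (by nlinarith)

section sqrtGini

variable {C : ℝ}

lemma sqrtGini_le_sqrt (hC : 0 ≤ C) {x : ℝ} (hx : x ∈ Set.Icc 0 1) : sqrtGini C x ≤ √C :=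
  Real.sqrt_le_sqrt (by nlinarith [hx.1, hx.2])

lemma sq_sqrtGini (hC : 1 ≤ C) {x : ℝ} (hx : x ∈ Set.Icc 0 1) :
    sqrtGini C x ^ 2 = x * (C - x) :=
  Real.sq_sqrt (by nlinarith [hx.1, hx.2])

lemma sqrtGini_concavity_gap (hC : 1 ≤ C) {a b t : ℝ} (ha : a ∈ Set.Icc 0 1)
    (hb : b ∈ Set.Icc 0 1) (ht : t ∈ Set.Icc 0 1) :
    √C / 8 * (t * (1 - t) * (b - a) ^ 2) ≤
      sqrtGini C (t * b + (1 - t) * a) - t * sqrtGini C b - (1 - t) * sqrtGini C a := by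
  obtain ⟨ha0, ha1⟩ := ha
  obtain ⟨hb0, hb1⟩ := hb
  obtain ⟨ht0, ht1⟩ := ht
  have hp : t * b + (1 - t) * a ∈ Set.Icc 0 1 := ⟨by nlinarith, by nlinarith⟩
  have hC0 : 0 ≤ C := by linarith
  set g := sqrtGini C (t * b + (1 - t) * a)
  set S := t * sqrtGini C b + (1 - t) * sqrtGini C a
  set u := √(b * (C - a))
  set v := √(a * (C - b))
  have hu2 : u ^ 2 = b * (C - a) := Real.sq_sqrt (by nlinarith)
  have hv2 : v ^ 2 = a * (C - b) := Real.sq_sqrt (by nlinarith)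
  have huv : sqrtGini C b * sqrtGini C a = u * v := by
    simp only [sqrtGini, u, v]
    rw [← Real.sqrt_mul (by nlinarith), ← Real.sqrt_mul (by nlinarith)]
    ring_nf
  have lagrange : g ^ 2 - S ^ 2 = t * (1 - t) * (u - v) ^ 2 := by
    linear_combination sq_sqrtGini hC hp - t ^ 2 * sq_sqrtGini hC ⟨hb0, hb1⟩
      - (1 - t) ^ 2 * sq_sqrtGini hC ⟨ha0, ha1⟩ - 2 * t * (1 - t) * huv
      - t * (1 - t) * hu2 - t * (1 - t) * hv2
  have hsC : √C ^ 2 = C := Real.sq_sqrt hC0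
  have hsep : C * (b - a) ^ 2 / 4 ≤ (u - v) ^ 2 := by
    have hprod : (u - v) * (u + v) = C * (b - a) := by linear_combination hu2 - hv2
    have hu : u ≤ √C := Real.sqrt_le_sqrt (by nlinarith)
    have hv : v ≤ √C := Real.sqrt_le_sqrt (by nlinarith)
    have : (u + v) ^ 2 ≤ 4 * C := by
      nlinarith [Real.sqrt_nonneg (b * (C - a)), Real.sqrt_nonneg (a * (C - b))]
    nlinarith [sq_nonneg (u - v)]
  have hS0 : 0 ≤ S := by
    have := Real.sqrt_nonneg (b * (C - b))
    have := Real.sqrt_nonneg (a * (C - a))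
    simp only [S, sqrtGini]
    nlinarith
  have hSg : S ≤ g := by
    refine le_of_pow_le_pow_left₀ two_ne_zero (Real.sqrt_nonneg _) ?_
    nlinarith [mul_nonneg (mul_nonneg ht0 (sub_nonneg.2 ht1)) (sq_nonneg (u - v))]
  have hgS : g + S ≤ 2 * √C := by
    have := sqrtGini_le_sqrt hC0 hp
    have := sqrtGini_le_sqrt hC0 ⟨hb0, hb1⟩
    have := sqrtGini_le_sqrt hC0 ⟨ha0, ha1⟩
    simp only [S]
    nlinarith
  calc √C / 8 * (t * (1 - t) * (b - a) ^ 2)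
      = t * (1 - t) * (C * (b - a) ^ 2 / 4) / (2 * √C) := by
        field_simp
        rw [hsC]
        ring
    _ ≤ t * (1 - t) * (u - v) ^ 2 / (2 * √C) := by gcongr
    _ = (g ^ 2 - S ^ 2) / (2 * √C) := by rw [lagrange]
    _ ≤ g - S := sq_sub_sq_div_le_sub hS0 hSg hgS
    _ = _ := by ring

lemma modGini_concavity_gap {ι : Type*} [Fintype ι] (hC : 1 ≤ C) {t : ℝ}
    {p q₀ q₁ : ι → ℝ} (hq₀ : ∀ i, q₀ i ∈ Set.Icc 0 1) (hq₁ : ∀ i, q₁ i ∈ Set.Icc 0 1)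
    (ht : t ∈ Set.Icc 0 1) (hp : ∀ i, t * q₁ i + (1 - t) * q₀ i = p i) :
    √C / 8 * (t * (1 - t) * ∑ i, (q₁ i - q₀ i) ^ 2) ≤
      modGini C p - (1 - t) * modGini C q₀ - t * modGini C q₁ := by
  have hgap : ∀ i, √C / 8 * (t * (1 - t) * (q₁ i - q₀ i) ^ 2) ≤
      sqrtGini C (p i) - t * sqrtGini C (q₁ i) - (1 - t) * sqrtGini C (q₀ i) := fun i =>
    hp i ▸ sqrtGini_concavity_gap hC (hq₀ i) (hq₁ i) ht
  calc √C / 8 * (t * (1 - t) * ∑ i, (q₁ i - q₀ i) ^ 2)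
      = ∑ i, √C / 8 * (t * (1 - t) * (q₁ i - q₀ i) ^ 2) := by simp only [mul_sum]
    _ ≤ ∑ i, (sqrtGini C (p i) - t * sqrtGini C (q₁ i) - (1 - t) * sqrtGini C (q₀ i)) :=
        sum_le_sum fun i _ => hgap i
    _ = _ := by simp only [modGini, sum_sub_distrib, mul_sum]; ring

end sqrtGini

lemma mul_div_mem_Icc_of_sum_mul_eq {ι : Type*} [Fintype ι] {π w : ι → ℝ} {b : ℝ}
    (hπ : ∀ i, 0 ≤ π i) (hw : ∀ i, 0 ≤ w i) (hsum : ∑ i, π i * w i = b) (hb : 0 < b)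
    (i : ι) : π i * w i / b ∈ Set.Icc 0 1 := by
  have h0 : ∀ j, 0 ≤ π j * w j / b := fun j => div_nonneg (mul_nonneg (hπ j) (hw j)) hb.le
  have h1 : ∑ j, π j * w j / b = 1 := by rw [← sum_div, hsum, div_self hb.ne']
  exact ⟨h0 i, h1 ▸ single_le_sum (fun j _ => h0 j) (mem_univ i)⟩

lemma sq_sub_children {π P β : ℝ} (hβ0 : β ≠ 0) (hβ1 : 1 - β ≠ 0) :
    β * (1 - β) * (π * P / β - π * (1 - P) / (1 - β)) ^ 2
      = (π * |β - P|) ^ 2 / (β * (1 - β)) := by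
  rw [mul_pow, sq_abs]
  field_simp
  ring

lemma modGini_split_gap {ι : Type*} [Fintype ι] {C β : ℝ} {π P : ι → ℝ} (hC : 1 ≤ C)
    (hπ : ∀ i, 0 ≤ π i) (hπs : ∑ i, π i = 1) (hP : ∀ i, P i ∈ Set.Icc 0 1)
    (hβ : β = ∑ i, π i * P i) (hβ0 : 0 < β) (hβ1 : β < 1) :
    √C / 8 * (∑ i, (π i * |β - P i|) ^ 2) / (β * (1 - β)) ≤
      modGini C π - (1 - β) * modGini C (fun i => π i * (1 - P i) / (1 - β))
        - β * modGini C (fun i => π i * P i / β) := by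
  have hsum₀ : ∑ i, π i * (1 - P i) = 1 - β := by
    simp only [mul_one_sub, sum_sub_distrib, hπs, hβ]
  have hπ₀ := mul_div_mem_Icc_of_sum_mul_eq hπ (fun i => sub_nonneg.2 (hP i).2) hsum₀
    (sub_pos.2 hβ1)
  have hπ₁ := mul_div_mem_Icc_of_sum_mul_eq hπ (fun i => (hP i).1) hβ.symm hβ0
  calc √C / 8 * (∑ i, (π i * |β - P i|) ^ 2) / (β * (1 - β))
      = √C / 8 * (β * (1 - β) * ∑ i, (π i * P i / β - π i * (1 - P i) / (1 - β)) ^ 2) := by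
        rw [mul_div_assoc, sum_div, mul_sum (a := β * (1 - β))]
        exact congrArg _ <| sum_congr rfl fun i _ =>
          (sq_sub_children hβ0.ne' (sub_pos.2 hβ1).ne').symm
    _ ≤ _ := modGini_concavity_gap hC hπ₀ hπ₁ ⟨hβ0.le, hβ1.le⟩ fun i => by
        field_simp [hβ0.ne', (sub_pos.2 hβ1).ne']
        ring

lemma sq_sub_two_div_cube_le {C : ℝ} (hC : 2 ≤ C) : (C - 2) ^ 2 / C ^ 3 ≤ √C / 8 := by
  have h1 : 1 ≤ √C := Real.one_le_sqrt.2 (by linarith)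
  have h2 : 8 * (C - 2) ^ 2 ≤ C ^ 3 := by
    nlinarith [mul_nonneg (sub_nonneg.2 hC) (sq_nonneg (C - 3))]
  rw [div_le_div_iff₀ (by positivity) (by norm_num)]
  nlinarith [pow_pos (by linarith : (0 : ℝ) < C) 3]

theorem modified_gini_reduction_weak_hyp_general (k : ℕ)
    (C : ℝ) (hC : 2 < C)
    (γ : ℝ) (hγ0 : 0 < γ)
    (π P : Fin k → ℝ) (β J : ℝ) (π₀ π₁ : Fin k → ℝ)
    (hπ : ∀ i, 0 ≤ π i) (hπs : ∑ i, π i = 1)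
    (hP0 : ∀ i, 0 ≤ P i) (hP1 : ∀ i, P i ≤ 1)
    (hβ : β = ∑ i, π i * P i)
    (hJ : J = 2 * ∑ i, π i * |β - P i|)
    (hβlo : γ ≤ β) (hβhi : β ≤ 1 - γ) (hJγ : 2 * γ ≤ J)
    (hπ₀ : ∀ i, π₀ i = π i * (1 - P i) / (1 - β))
    (hπ₁ : ∀ i, π₁ i = π i * P i / β) :
    (∑ i, Real.sqrt (π i * (C - π i)))
        - (1 - β) * (∑ i, Real.sqrt (π₀ i * (C - π₀ i)))
        - β * (∑ i, Real.sqrt (π₁ i * (C - π₁ i)))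
      ≥ ((C - 2)^2 * γ^2) / (C^3 * k * (1 - γ)^2) := by
  have hk : (0 : ℝ) < k := by
    rcases Nat.eq_zero_or_pos k with rfl | hk
    · simp at hπs
    · exact_mod_cast hk
  obtain rfl : π₀ = _ := funext hπ₀
  obtain rfl : π₁ = _ := funext hπ₁
  have hvar : 0 < β * (1 - β) := mul_pos (by linarith) (by linarith)
  have hvar_le : β * (1 - β) ≤ (1 - γ) ^ 2 := by nlinarith
  have hmass : γ ≤ ∑ i, π i * |β - P i| := by linarith
  have hCS : γ ^ 2 / k ≤ ∑ i, (π i * |β - P i|) ^ 2 := by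
    rw [div_le_iff₀' hk]
    calc γ ^ 2 ≤ (∑ i, π i * |β - P i|) ^ 2 := by gcongr
      _ ≤ k * ∑ i, (π i * |β - P i|) ^ 2 := by
          simpa using sq_sum_le_card_mul_sum_sq (s := univ) (f := fun i => π i * |β - P i|)
  calc ((C - 2) ^ 2 * γ ^ 2) / (C ^ 3 * k * (1 - γ) ^ 2)
      = (C - 2) ^ 2 / C ^ 3 * (γ ^ 2 / k) / (1 - γ) ^ 2 := by field_simp
    _ ≤ √C / 8 * (γ ^ 2 / k) / (β * (1 - β)) := by
        gcongr ?_ * _ / ?_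
        exact sq_sub_two_div_cube_le hC.le
    _ ≤ √C / 8 * (∑ i, (π i * |β - P i|) ^ 2) / (β * (1 - β)) := by gcongr
    _ ≤ _ := modGini_split_gap (by linarith) hπ hπs (fun i => ⟨hP0 i, hP1 i⟩) hβ
        (by linarith) (by linarith)

/-- Equation (9): under the weak hypothesis assumption the modified Gini-entropy
reduction of a split is at least `(C-2)²γ²/(C³ k (1-γ)²)`. -/
theorem modified_gini_reduction_weak_hyp (k : ℕ) (hk : 2 ≤ k)
    (C : ℝ) (hC : 2 < C)
    (γ : ℝ) (hγ0 : 0 < γ) (hγhalf : γ ≤ 1/2)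
    (π P : Fin k → ℝ) (β J : ℝ) (π₀ π₁ : Fin k → ℝ)
    (hπ : ∀ i, 0 ≤ π i) (hπs : ∑ i, π i = 1)
    (hP0 : ∀ i, 0 ≤ P i) (hP1 : ∀ i, P i ≤ 1)
    (hβ : β = ∑ i, π i * P i)
    (hJ : J = 2 * ∑ i, π i * |β - P i|)
    (hβlo : γ ≤ β) (hβhi : β ≤ 1 - γ) (hJγ : 2 * γ ≤ J)
    (hπ₀ : ∀ i, π₀ i = π i * (1 - P i) / (1 - β))
    (hπ₁ : ∀ i, π₁ i = π i * P i / β) :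
    (∑ i, Real.sqrt (π i * (C - π i)))
        - (1 - β) * (∑ i, Real.sqrt (π₀ i * (C - π₀ i)))
        - β * (∑ i, Real.sqrt (π₁ i * (C - π₁ i)))
      ≥ ((C - 2)^2 * γ^2) / (C^3 * k * (1 - γ)^2) :=
  modified_gini_reduction_weak_hyp_general k C hC γ hγ0 π P β J π₀ π₁ hπ hπs hP0 hP1 hβ hJ hβlo hβhi
    hJγ hπ₀ hπ₁
end

section
/- Let η be a real number with 0 < η and η^2 ≤ 32, and let G : ℕ → ℝ satisfy G t ≥ 0 for all t ≥ 1 and G (t+1) ≤ G t * (1 - η^2 / (16 * (t+1))) for all t ≥ 1. Then for every integer s ≥ 1, G (2^s) ≤ G 1 * Real.exp (-(η^2) * s / 32). -/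
/-!
With `c = η² / 16` the recurrence reads `G (t + 1) ≤ G t * (1 - c / (t + 1))`. On a dyadic block
`n ≤ t < 2n` every factor satisfies `1 - c / (t + 1) ≤ exp (-c / (t + 1)) ≤ exp (-c / (2n))`, so the
`n` steps of the block lose at least a factor `exp (-c / 2)`. The `s` blocks from `1` to `2 ^ s`
give `exp (-c s / 2) = exp (-η² s / 32)`.
-/

open Real

theorem le_mul_pow_of_forall_le_mul {G : ℕ → ℝ} {r : ℝ} (hr : 0 ≤ r) (n k : ℕ)
    (h : ∀ t, n ≤ t → t < n + k → G (t + 1) ≤ G t * r) : G (n + k) ≤ G n * r ^ k := by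
  induction k with
  | zero => simp
  | succ k ih =>
    calc G (n + (k + 1)) = G (n + k + 1) := rfl
      _ ≤ G (n + k) * r := h _ (by omega) (by omega)
      _ ≤ G n * r ^ k * r := by
        gcongr
        exact ih fun t hnt htk => h t hnt (by omega)
      _ = G n * r ^ (k + 1) := by rw [pow_succ, mul_assoc]

theorem one_sub_div_le_exp_neg_div {c a b : ℝ} (hc : 0 ≤ c) (ha : 0 < a) (hab : a ≤ b) :
    1 - c / a ≤ exp (-(c / b)) :=
  calc 1 - c / a ≤ exp (-(c / a)) := one_sub_le_exp_neg _
    _ ≤ exp (-(c / b)) := by gcongr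

theorem apply_two_mul_le_mul_exp_of_le_mul_one_sub_div {G : ℕ → ℝ} {c : ℝ} (hc : 0 ≤ c)
    (hG0 : ∀ t : ℕ, 1 ≤ t → 0 ≤ G t)
    (hrec : ∀ t : ℕ, 1 ≤ t → G (t + 1) ≤ G t * (1 - c / ((t : ℝ) + 1)))
    {n : ℕ} (hn : 1 ≤ n) : G (2 * n) ≤ G n * exp (-(c / 2)) := by
  have hstep : ∀ t, n ≤ t → t < n + n → G (t + 1) ≤ G t * exp (-(c / (2 * n))) := by
    intro t hnt htn
    have hle : (t : ℝ) + 1 ≤ 2 * n := by norm_cast; omega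
    exact (hrec t (by omega)).trans <| mul_le_mul_of_nonneg_left
      (one_sub_div_le_exp_neg_div hc (by positivity) hle) (hG0 t (by omega))
  have hblock := le_mul_pow_of_forall_le_mul (exp_pos _).le n n hstep
  have hexponent : (n : ℝ) * -(c / (2 * n)) = -(c / 2) := by field_simp
  rwa [← two_mul, ← exp_nat_mul, hexponent] at hblock

theorem dyadic_recurrence_bound_general (η : ℝ)
    (G : ℕ → ℝ)
    (hG0 : ∀ t : ℕ, 1 ≤ t → 0 ≤ G t)
    (hrec : ∀ t : ℕ, 1 ≤ t → G (t+1) ≤ G t * (1 - η^2 / (16 * ((t : ℝ) + 1))))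
    (s : ℕ) :
    G (2^s) ≤ G 1 * Real.exp (-(η^2) * s / 32) := by
  have hrec' : ∀ t : ℕ, 1 ≤ t → G (t + 1) ≤ G t * (1 - η ^ 2 / 16 / ((t : ℝ) + 1)) := by
    simpa only [div_div] using hrec
  have hdouble : ∀ m, G (2 ^ (m + 1)) ≤ G (2 ^ m) * exp (-(η ^ 2 / 16 / 2)) := fun m => by
    rw [pow_succ']
    exact apply_two_mul_le_mul_exp_of_le_mul_one_sub_div (by positivity) hG0 hrec'
      Nat.one_le_two_pow
  have hiter := le_mul_pow_of_forall_le_mul (G := fun m => G (2 ^ m)) (exp_pos _).le 0 s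
    fun m _ _ => hdouble m
  rw [zero_add, pow_zero, ← exp_nat_mul] at hiter
  convert hiter using 3
  ring

/-- Equation (10): dyadic recurrence bound. -/
theorem dyadic_recurrence_bound (η : ℝ) (hη : 0 < η) (hη32 : η^2 ≤ 32)
    (G : ℕ → ℝ)
    (hG0 : ∀ t : ℕ, 1 ≤ t → 0 ≤ G t)
    (hrec : ∀ t : ℕ, 1 ≤ t → G (t+1) ≤ G t * (1 - η^2 / (16 * ((t : ℝ) + 1))))
    (s : ℕ) (hs : 1 ≤ s) :
    G (2^s) ≤ G 1 * Real.exp (-(η^2) * s / 32) :=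
  dyadic_recurrence_bound_general η G hG0 hrec s
end

section
/- (Theorem 1, boosting for the entropy criterion, in the form established by the paper's proof.) Fix an integer k ≥ 2 and γ ∈ (0, 1/2], and set η^2 = 8*γ^2 / ((1-γ)^2 * Real.log k). Let G : ℕ → ℝ satisfy G t ≥ 0 for all t ≥ 1, G 1 ≤ 2 * Real.log k, and G (t+1) ≤ G t * (1 - η^2 / (16 * (t+1))) for all t ≥ 1. Then for every α ∈ (0, 2 * Real.log k] and every t ≥ 1 such that t+1 is a power of 2 and t ≥ (2 * Real.log k / α) ^ (4 * (1-γ)^2 * Real.log k / (γ^2 * Real.logb 2 (Real.exp 1))), one has G t ≤ α. -/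
/-!
Bounding `1 - c/(s+1) ≤ exp (-c/(s+1))` and comparing `1/(s+1)` with the increment of
`log s / (2 log 2)` turns the multiplicative recurrence into polynomial decay
`G t ≤ G 1 · t ^ (-c / (2 log 2))` with `c = η² / 16`. For this `c` the decay exponent is exactly the
reciprocal of the exponent in the lower bound on `t`, so `G t ≤ 2 log k · (2 log k / α)⁻¹ = α`.
-/

open Real

/-- Sharp at `t = 1`; the crude bound `log (1 + 1/t) ≤ 1/t` only suffices from `t = 3` on. -/
theorem log_succ_sub_log_le (t : ℕ) (ht : 1 ≤ t) :
    log ((t : ℝ) + 1) - log t ≤ 2 * log 2 / ((t : ℝ) + 1) := by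
  rcases (by omega : t = 1 ∨ t = 2 ∨ 3 ≤ t) with rfl | rfl | h3
  · norm_num
  · have h27 : log 27 ≤ log 32 := log_le_log (by norm_num) (by norm_num)
    rw [show (27 : ℝ) = 3 ^ 3 by norm_num, show (32 : ℝ) = 2 ^ 5 by norm_num,
      log_pow, log_pow] at h27
    push_cast at h27 ⊢
    linarith
  · have htR : (3 : ℝ) ≤ t := by exact_mod_cast h3
    have hlog2 := log_two_gt_d9
    calc log ((t : ℝ) + 1) - log t = log (((t : ℝ) + 1) / t) := by
          rw [log_div (by positivity) (by positivity)]
      _ ≤ ((t : ℝ) + 1) / t - 1 := log_le_sub_one_of_pos (by positivity)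
      _ = 1 / t := by field_simp; ring
      _ ≤ 2 * log 2 / ((t : ℝ) + 1) := by
          rw [div_le_div_iff₀ (by positivity) (by positivity)]
          nlinarith

theorem rpow_neg_mul_exp_le_succ_rpow_neg {c : ℝ} (hc : 0 ≤ c) (t : ℕ) (ht : 1 ≤ t) :
    (t : ℝ) ^ (-(c / (2 * log 2))) * exp (-(c / ((t : ℝ) + 1))) ≤
      ((t : ℝ) + 1) ^ (-(c / (2 * log 2))) := by
  have htR : (0 : ℝ) < t := by exact_mod_cast ht
  have hlog2 : 0 < log 2 := log_pos one_lt_two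
  have hstep : c / (2 * log 2) * (log ((t : ℝ) + 1) - log t) ≤ c / ((t : ℝ) + 1) :=
    calc c / (2 * log 2) * (log ((t : ℝ) + 1) - log t)
        ≤ c / (2 * log 2) * (2 * log 2 / ((t : ℝ) + 1)) :=
          mul_le_mul_of_nonneg_left (log_succ_sub_log_le t ht) (by positivity)
      _ = c / ((t : ℝ) + 1) := by field_simp
  rw [rpow_def_of_pos htR, rpow_def_of_pos (by positivity), ← exp_add, exp_le_exp]
  linarith

theorem le_mul_rpow_neg_of_le_mul_one_sub {G : ℕ → ℝ} {c : ℝ} (hc : 0 ≤ c)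
    (hG0 : ∀ t : ℕ, 1 ≤ t → 0 ≤ G t)
    (hrec : ∀ t : ℕ, 1 ≤ t → G (t + 1) ≤ G t * (1 - c / ((t : ℝ) + 1)))
    (t : ℕ) (ht : 1 ≤ t) :
    G t ≤ G 1 * (t : ℝ) ^ (-(c / (2 * log 2))) := by
  induction t, ht using Nat.le_induction with
  | base => simp
  | succ t ht ih =>
    calc G (t + 1) ≤ G t * (1 - c / ((t : ℝ) + 1)) := hrec t ht
      _ ≤ G t * exp (-(c / ((t : ℝ) + 1))) := by
          gcongr
          · exact hG0 t ht
          · linarith [add_one_le_exp (-(c / ((t : ℝ) + 1)))]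
      _ ≤ G 1 * (t : ℝ) ^ (-(c / (2 * log 2))) * exp (-(c / ((t : ℝ) + 1))) := by gcongr
      _ ≤ G 1 * ((t : ℝ) + 1) ^ (-(c / (2 * log 2))) := by
          rw [mul_assoc]
          gcongr
          · exact hG0 1 le_rfl
          · exact rpow_neg_mul_exp_le_succ_rpow_neg hc t ht
      _ = G 1 * ((t + 1 : ℕ) : ℝ) ^ (-(c / (2 * log 2))) := by push_cast; rfl

theorem boosting_entropy_general (k : ℕ) (hk : 2 ≤ k)
    (γ : ℝ) (hγ0 : 0 < γ) (hγhalf : γ ≤ 1/2)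
    (η : ℝ) (hη : η^2 = 8 * γ^2 / ((1 - γ)^2 * Real.log k))
    (G : ℕ → ℝ)
    (hG0 : ∀ t : ℕ, 1 ≤ t → 0 ≤ G t)
    (hG1 : G 1 ≤ 2 * Real.log k)
    (hrec : ∀ t : ℕ, 1 ≤ t → G (t+1) ≤ G t * (1 - η^2 / (16 * ((t : ℝ) + 1))))
    (α : ℝ) (hα0 : 0 < α)
    (t : ℕ)
    (htbig : (t : ℝ) ≥ (2 * Real.log k / α) ^
      (4 * (1 - γ)^2 * Real.log k / (γ^2 * Real.logb 2 (Real.exp 1)))) :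
    G t ≤ α := by
  set E := 4 * (1 - γ)^2 * Real.log k / (γ^2 * Real.logb 2 (Real.exp 1)) with hE
  set x := 2 * Real.log k / α with hx
  have hlogk : 0 < log k := log_pos (by exact_mod_cast hk)
  have hlog2 : 0 < log 2 := log_pos one_lt_two
  have hγ1 : 0 < 1 - γ := by linarith
  have hE0 : 0 < E := by rw [hE, logb, log_exp]; positivity
  have hx0 : 0 < x := by positivity
  have hrate : η ^ 2 / 16 / (2 * log 2) = E⁻¹ := by
    rw [hη, hE, logb, log_exp]; field_simp; ring
  have ht : 1 ≤ t := Nat.cast_pos.mp ((rpow_pos_of_pos hx0 E).trans_le htbig)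
  have hdecay := le_mul_rpow_neg_of_le_mul_one_sub (c := η ^ 2 / 16) (by positivity) hG0
    (by simpa only [div_div] using hrec) t ht
  calc G t ≤ 2 * log k * (t : ℝ) ^ (-E⁻¹) := by
        rw [hrate] at hdecay
        exact hdecay.trans (by gcongr)
    _ ≤ 2 * log k * (x ^ E) ^ (-E⁻¹) :=
        mul_le_mul_of_nonneg_left
          (rpow_le_rpow_of_nonpos (by positivity) htbig (by simpa using hE0.le)) (by positivity)
    _ = α := by
        rw [← rpow_mul hx0.le, mul_neg, mul_inv_cancel₀ hE0.ne', rpow_neg_one, hx]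
        field_simp

/-- Theorem 1: boosting guarantee for the entropy criterion. -/
theorem boosting_entropy (k : ℕ) (hk : 2 ≤ k)
    (γ : ℝ) (hγ0 : 0 < γ) (hγhalf : γ ≤ 1/2)
    (η : ℝ) (hη : η^2 = 8 * γ^2 / ((1 - γ)^2 * Real.log k))
    (G : ℕ → ℝ)
    (hG0 : ∀ t : ℕ, 1 ≤ t → 0 ≤ G t)
    (hG1 : G 1 ≤ 2 * Real.log k)
    (hrec : ∀ t : ℕ, 1 ≤ t → G (t+1) ≤ G t * (1 - η^2 / (16 * ((t : ℝ) + 1))))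
    (α : ℝ) (hα0 : 0 < α) (hα : α ≤ 2 * Real.log k)
    (t : ℕ) (ht : 1 ≤ t) (hpow : ∃ s : ℕ, t + 1 = 2^s)
    (htbig : (t : ℝ) ≥ (2 * Real.log k / α) ^
      (4 * (1 - γ)^2 * Real.log k / (γ^2 * Real.logb 2 (Real.exp 1)))) :
    G t ≤ α :=
  boosting_entropy_general k hk γ hγ0 hγhalf η hη G hG0 hG1 hrec α hα0 t htbig
end

section
/- (Theorem 2, boosting for the Gini-entropy criterion, in the form established by the paper's proof.) Fix an integer k ≥ 2 and γ ∈ (0, 1/2], and set η^2 = 16*γ^2 / ((1-γ)^2 * (k-1)). Let G : ℕ → ℝ satisfy G t ≥ 0 for all t ≥ 1, G 1 ≤ 2 * (1 - 1/k), and G (t+1) ≤ G t * (1 - η^2 / (16 * (t+1))) for all t ≥ 1. Then for every α ∈ (0, 2 * (1 - 1/k)] and every t ≥ 1 such that t+1 is a power of 2 and t ≥ (2 * (1 - 1/k) / α) ^ (2 * (1-γ)^2 * (k-1) / (γ^2 * Real.logb 2 (Real.exp 1))), one has G t ≤ α. -/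
/-!
Unrolling the recurrence with `c = η² / 16` gives
`G t ≤ G 1 · ∏_{j=2}^t (1 - c/j) ≤ G 1 · exp (-c H)` with `H = ∑_{j=2}^t 1/j`.
The partial harmonic sum satisfies `log t ≤ 2 log 2 · H` for every `t`, because the increment
`log (1 + 1/t)` is at most `2 log 2 / (t + 1)` for `t ≥ 2` (from `log x ≤ sinh (log x)`). Hence `G t ≤ α` as soon as
`log t ≥ (2 log 2 / c) · log (G 1 / α)`, and `2 log 2 / c` is exactly the exponent of the theorem.
-/

open Finset Real

lemma log_le_sub_inv_div_two {x : ℝ} (hx : 1 ≤ x) : log x ≤ (x - x⁻¹) / 2 := by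
  rw [← sinh_log (by linarith)]
  exact self_le_sinh_iff.mpr (log_nonneg hx)

lemma log_add_one_sub_log_le {x : ℝ} (hx : 2 ≤ x) :
    log (x + 1) - log x ≤ 2 * log 2 / (x + 1) := by
  have hx0 : 0 < x := by linarith
  rw [← log_div (by positivity) hx0.ne']
  calc log ((x + 1) / x) ≤ ((x + 1) / x - ((x + 1) / x)⁻¹) / 2 :=
        log_le_sub_inv_div_two (by rw [le_div_iff₀ hx0]; linarith)
    _ = (2 * x + 1) / (2 * x) / (x + 1) := by field_simp; ring
    _ ≤ 2 * log 2 / (x + 1) := by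
        gcongr
        rw [div_le_iff₀ (by positivity)]
        nlinarith [log_two_gt_d9]

lemma log_le_two_mul_log_two_mul_sum_Icc_inv (t : ℕ) :
    log t ≤ 2 * log 2 * ∑ j ∈ Icc 2 t, (j : ℝ)⁻¹ := by
  induction t with
  | zero => simp
  | succ n ih =>
    match n, ih with
    | 0, _ => simp
    | 1, _ => norm_num; linarith
    | n + 2, ih =>
      have hstep := log_add_one_sub_log_le (x := ((n + 2 : ℕ) : ℝ)) (by push_cast; linarith)
      rw [sum_Icc_succ_top (by omega), mul_add]
      push_cast at hstep ih ⊢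
      linarith [div_eq_mul_inv (2 * log 2) ((n : ℝ) + 2 + 1)]

lemma le_mul_prod_Icc_of_le_mul {G f : ℕ → ℝ} (hf : ∀ j, 2 ≤ j → 0 ≤ f j)
    (hrec : ∀ t, 1 ≤ t → G (t + 1) ≤ G t * f (t + 1)) {t : ℕ} (ht : 1 ≤ t) :
    G t ≤ G 1 * ∏ j ∈ Icc 2 t, f j := by
  induction t, ht using Nat.le_induction with
  | base => simp
  | succ n hn ih =>
    rw [prod_Icc_succ_top (by omega), ← mul_assoc]
    exact (hrec n hn).trans (mul_le_mul_of_nonneg_right ih (hf _ (by omega)))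

lemma prod_one_sub_le_exp_neg_sum {ι : Type*} (s : Finset ι) {x : ι → ℝ}
    (hx : ∀ i ∈ s, x i ≤ 1) : ∏ i ∈ s, (1 - x i) ≤ exp (-∑ i ∈ s, x i) := by
  rw [← sum_neg_distrib, exp_sum]
  exact prod_le_prod (fun i hi => by linarith [hx i hi])
    fun i _ => by linarith [add_one_le_exp (-x i)]

theorem le_of_le_mul_one_sub_div {G : ℕ → ℝ} {c B α : ℝ} (hc0 : 0 < c) (hc2 : c ≤ 2)
    (hB : 0 < B) (hG1 : G 1 ≤ B) (hrec : ∀ t : ℕ, 1 ≤ t → G (t + 1) ≤ G t * (1 - c / (t + 1)))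
    (hα : 0 < α) {t : ℕ} (ht : 1 ≤ t) (htbig : (B / α) ^ (2 * log 2 / c) ≤ t) :
    G t ≤ α := by
  set S := ∑ j ∈ Icc 2 t, (j : ℝ)⁻¹
  have hfactor : ∀ j : ℕ, 2 ≤ j → c / j ≤ 1 := fun j hj => by
    rw [div_le_one (by positivity)]
    exact hc2.trans (by exact_mod_cast hj)
  have hlog : log (B / α) ≤ c * S := by
    have hl2 : 0 < 2 * log 2 := by positivity
    have h := log_le_log (by positivity) htbig
    rw [log_rpow (by positivity), div_mul_eq_mul_div, div_le_iff₀ hc0] at h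
    have := log_le_two_mul_log_two_mul_sum_Icc_inv t
    refine le_of_mul_le_mul_left ?_ hl2
    nlinarith
  calc G t ≤ G 1 * ∏ j ∈ Icc 2 t, (1 - c / j) :=
        le_mul_prod_Icc_of_le_mul (fun j hj => by linarith [hfactor j hj])
          (fun u hu => by exact_mod_cast hrec u hu) ht
    _ ≤ B * ∏ j ∈ Icc 2 t, (1 - c / j) :=
        mul_le_mul_of_nonneg_right hG1
          (prod_nonneg fun j hj => by linarith [hfactor j (mem_Icc.mp hj).1])
    _ ≤ B * exp (-∑ j ∈ Icc 2 t, c / j) := by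
        gcongr
        exact prod_one_sub_le_exp_neg_sum _ fun j hj => hfactor j (mem_Icc.mp hj).1
    _ ≤ B * exp (-log (B / α)) := by
        gcongr
        simpa only [S, mul_sum, div_eq_mul_inv] using hlog
    _ = α := by
        rw [exp_neg, exp_log (by positivity)]
        field_simp

theorem boosting_gini_general (k : ℕ) (hk : 2 ≤ k)
    (γ : ℝ) (hγ0 : 0 < γ) (hγhalf : γ ≤ 1/2)
    (η : ℝ) (hη : η^2 = 16 * γ^2 / ((1 - γ)^2 * ((k : ℝ) - 1)))
    (G : ℕ → ℝ)
    (hG1 : G 1 ≤ 2 * (1 - 1 / (k : ℝ)))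
    (hrec : ∀ t : ℕ, 1 ≤ t → G (t+1) ≤ G t * (1 - η^2 / (16 * ((t : ℝ) + 1))))
    (α : ℝ) (hα0 : 0 < α)
    (t : ℕ) (ht : 1 ≤ t)
    (htbig : (t : ℝ) ≥ (2 * (1 - 1 / (k : ℝ)) / α) ^
      (2 * (1 - γ)^2 * ((k : ℝ) - 1) / (γ^2 * Real.logb 2 (Real.exp 1)))) :
    G t ≤ α := by
  have hk2 : (2 : ℝ) ≤ k := by exact_mod_cast hk
  have hk1 : 0 < (k : ℝ) - 1 := by linarith
  have hγ1 : 0 < 1 - γ := by linarith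
  set c := γ ^ 2 / ((1 - γ) ^ 2 * ((k : ℝ) - 1)) with hc
  have hc0 : 0 < c := by positivity
  have hc2 : c ≤ 2 := by
    rw [div_le_iff₀ (by positivity)]
    nlinarith
  have hexponent : 2 * (1 - γ) ^ 2 * ((k : ℝ) - 1) / (γ ^ 2 * logb 2 (exp 1)) = 2 * log 2 / c := by
    rw [logb, log_exp, hc]
    field_simp
  have hB : 0 < 2 * (1 - 1 / (k : ℝ)) := by
    have : 1 / (k : ℝ) < 1 := by rw [div_lt_one (by positivity)]; linarith
    linarith
  refine le_of_le_mul_one_sub_div hc0 hc2 hB hG1 (fun u hu => ?_) hα0 ht (by rwa [← hexponent])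
  have hηc : η ^ 2 / 16 = c := by rw [hη]; ring
  simpa only [div_mul_eq_div_div, hηc] using hrec u hu

/-- Theorem 2: boosting guarantee for the Gini-entropy criterion. -/
theorem boosting_gini (k : ℕ) (hk : 2 ≤ k)
    (γ : ℝ) (hγ0 : 0 < γ) (hγhalf : γ ≤ 1/2)
    (η : ℝ) (hη : η^2 = 16 * γ^2 / ((1 - γ)^2 * ((k : ℝ) - 1)))
    (G : ℕ → ℝ)
    (hG0 : ∀ t : ℕ, 1 ≤ t → 0 ≤ G t)
    (hG1 : G 1 ≤ 2 * (1 - 1 / (k : ℝ)))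
    (hrec : ∀ t : ℕ, 1 ≤ t → G (t+1) ≤ G t * (1 - η^2 / (16 * ((t : ℝ) + 1))))
    (α : ℝ) (hα0 : 0 < α) (hα : α ≤ 2 * (1 - 1 / (k : ℝ)))
    (t : ℕ) (ht : 1 ≤ t) (hpow : ∃ s : ℕ, t + 1 = 2^s)
    (htbig : (t : ℝ) ≥ (2 * (1 - 1 / (k : ℝ)) / α) ^
      (2 * (1 - γ)^2 * ((k : ℝ) - 1) / (γ^2 * Real.logb 2 (Real.exp 1)))) :
    G t ≤ α :=
  boosting_gini_general k hk γ hγ0 hγhalf η hη G hG1 hrec α hα0 t ht htbig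
end

section
/- (Theorem 3, boosting for the modified Gini-entropy criterion, in the form established by the paper's proof.) Fix an integer k ≥ 2, γ ∈ (0, 1/2], and a real constant C > 2, and set η^2 = 16*γ^2*(C-2)^2 / ((1-γ)^2 * C^3 * k * Real.sqrt (k*C - 1)). Let G : ℕ → ℝ satisfy G t ≥ 0 for all t ≥ 1, G 1 ≤ 2 * Real.sqrt (k*C - 1), and G (t+1) ≤ G t * (1 - η^2 / (16 * (t+1))) for all t ≥ 1. Then for every α ∈ [Real.sqrt (C-1), 2 * Real.sqrt (k*C - 1)] and every t ≥ 1 such that t+1 is a power of 2 and t ≥ (2 * Real.sqrt (k*C - 1) / α) ^ (2 * (1-γ)^2 * C^3 * k * Real.sqrt (k*C - 1) / (γ^2 * (C-2)^2 * Real.logb 2 (Real.exp 1))), one has G t ≤ α. -/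
/-!
Unrolling `G (t+1) ≤ G t * (1 - η²/(16 (t+1)))` with `1 - x ≤ exp (-x)` gives
`G t ≤ G 1 * exp (-(η²/16) ∑_{j=2}^{t} 1/j)`, and `∑_{j=2}^{t} 1/j ≥ log t / log 4`, so `G` decays
like `t ^ (-(η²/16) / log 4)`. As `logb 2 e = 1 / log 2`, the exponent in the lower bound on `t`
is `log 4 / (η²/16)`: exactly the threshold at which this power drops below `α / (2 √(kC - 1))`.
-/

open Real Finset

-- Tight at `n = 1`; the cases `n = 1, 2` are too close for `log (1 + 1/n) ≤ 1/n`.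
lemma log_succ_sub_log_le_log_four_div {n : ℕ} (hn : 1 ≤ n) :
    log (n + 1) - log n ≤ log 4 / (n + 1) := by
  obtain rfl | rfl | hn3 : n = 1 ∨ n = 2 ∨ 3 ≤ n := by omega
  · norm_num [log_four_eq]
  · have h27 : log 27 ≤ log 32 := log_le_log (by norm_num) (by norm_num)
    rw [show (27 : ℝ) = 3 ^ 3 by norm_num, show (32 : ℝ) = 2 ^ 5 by norm_num,
      log_pow, log_pow] at h27
    norm_num [log_four_eq]
    push_cast at h27
    linarith
  · have hlog2 := log_two_gt_d9
    have hn3' : (3 : ℝ) ≤ n := by exact_mod_cast hn3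
    have hn0 : (0 : ℝ) < n := by linarith
    have hstep : log (n + 1) - log n ≤ 1 / n := by
      rw [← log_div (by positivity) hn0.ne']
      have := log_le_sub_one_of_pos (show (0 : ℝ) < (n + 1) / n by positivity)
      rw [add_div, div_self hn0.ne'] at this ⊢
      linarith
    refine hstep.trans ?_
    rw [div_le_div_iff₀ hn0 (by positivity), log_four_eq]
    nlinarith

lemma log_le_log_four_mul_sum_Icc_inv {t : ℕ} (ht : 1 ≤ t) :
    log t ≤ log 4 * ∑ j ∈ Icc 2 t, (j : ℝ)⁻¹ := by
  induction t, ht using Nat.le_induction with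
  | base => simp
  | succ n hn ih =>
    have hstep := log_succ_sub_log_le_log_four_div hn
    rw [sum_Icc_succ_top (by omega), mul_add]
    push_cast
    rw [← div_eq_mul_inv]
    linarith

section Recurrence

variable {u : ℕ → ℝ} {a : ℝ}

lemma le_mul_exp_neg_mul_sum_Icc_inv (hu : ∀ n, 1 ≤ n → 0 ≤ u n)
    (hrec : ∀ n : ℕ, 1 ≤ n → u (n + 1) ≤ u n * (1 - a / (n + 1))) {n : ℕ} (hn : 1 ≤ n) :
    u n ≤ u 1 * exp (-(a * ∑ j ∈ Icc 2 n, (j : ℝ)⁻¹)) := by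
  induction n, hn using Nat.le_induction with
  | base => simp
  | succ n hn ih =>
    have hexp : 1 - a / (n + 1) ≤ exp (-(a / (n + 1))) := by
      linarith [add_one_le_exp (-(a / (n + 1)))]
    calc u (n + 1) ≤ u n * (1 - a / (n + 1)) := hrec n hn
      _ ≤ u n * exp (-(a / (n + 1))) := mul_le_mul_of_nonneg_left hexp (hu n hn)
      _ ≤ u 1 * exp (-(a * ∑ j ∈ Icc 2 n, (j : ℝ)⁻¹)) * exp (-(a / (n + 1))) :=
        mul_le_mul_of_nonneg_right ih (exp_nonneg _)
      _ = u 1 * exp (-(a * ∑ j ∈ Icc 2 (n + 1), (j : ℝ)⁻¹)) := by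
        rw [sum_Icc_succ_top (by omega), mul_assoc, ← exp_add]
        push_cast
        ring_nf

lemma le_mul_rpow_neg_of_le_mul_one_sub_div (ha : 0 ≤ a) (hu : ∀ n, 1 ≤ n → 0 ≤ u n)
    (hrec : ∀ n : ℕ, 1 ≤ n → u (n + 1) ≤ u n * (1 - a / (n + 1))) {n : ℕ} (hn : 1 ≤ n) :
    u n ≤ u 1 * (n : ℝ) ^ (-(a / log 4)) := by
  have hlog4 : 0 < log 4 := log_pos (by norm_num)
  have hsum : log n / log 4 ≤ ∑ j ∈ Icc 2 n, (j : ℝ)⁻¹ := by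
    rw [div_le_iff₀' hlog4]
    exact log_le_log_four_mul_sum_Icc_inv hn
  refine (le_mul_exp_neg_mul_sum_Icc_inv hu hrec hn).trans ?_
  rw [rpow_def_of_pos (by exact_mod_cast hn)]
  refine mul_le_mul_of_nonneg_left (exp_le_exp.2 ?_) (hu 1 le_rfl)
  have := mul_le_mul_of_nonneg_left hsum ha
  rw [mul_neg, neg_le_neg_iff, mul_div_left_comm]
  exact this

end Recurrence

lemma rpow_neg_le_inv_of_rpow_inv_le {x R c : ℝ} (hR : 0 < R) (hc : 0 < c)
    (h : R ^ c⁻¹ ≤ x) : x ^ (-c) ≤ R⁻¹ := by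
  have hx : 0 ≤ x := (rpow_pos_of_pos hR _).le.trans h
  rw [rpow_neg hx]
  exact inv_anti₀ hR ((rpow_inv_le_iff_of_pos hR.le hx hc).1 h)

theorem boosting_modified_gini_general (k : ℕ)
    (γ : ℝ) (hγ0 : 0 < γ) (hγhalf : γ ≤ 1/2)
    (C : ℝ) (hC : 2 < C)
    (η : ℝ) (hη : η^2 = 16 * γ^2 * (C - 2)^2 /
      ((1 - γ)^2 * C^3 * (k : ℝ) * Real.sqrt ((k : ℝ) * C - 1)))
    (G : ℕ → ℝ)
    (hG0 : ∀ t : ℕ, 1 ≤ t → 0 ≤ G t)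
    (hG1 : G 1 ≤ 2 * Real.sqrt ((k : ℝ) * C - 1))
    (hrec : ∀ t : ℕ, 1 ≤ t → G (t+1) ≤ G t * (1 - η^2 / (16 * ((t : ℝ) + 1))))
    (α : ℝ) (hαlo : Real.sqrt (C - 1) ≤ α) (hαhi : α ≤ 2 * Real.sqrt ((k : ℝ) * C - 1))
    (t : ℕ) (ht : 1 ≤ t)
    (htbig : (t : ℝ) ≥ (2 * Real.sqrt ((k : ℝ) * C - 1) / α) ^
      (2 * (1 - γ)^2 * C^3 * (k : ℝ) * Real.sqrt ((k : ℝ) * C - 1) /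
        (γ^2 * (C - 2)^2 * Real.logb 2 (Real.exp 1)))) :
    G t ≤ α := by
  set B := 2 * √(k * C - 1)
  have hα : 0 < α := (sqrt_pos.2 (by linarith)).trans_le hαlo
  have hB : 0 < B := hα.trans_le hαhi
  have hkC : 0 < (k : ℝ) * C - 1 := sqrt_pos.1 (pos_of_mul_pos_right hB zero_le_two)
  have hk : 0 < (k : ℝ) := pos_of_mul_pos_left (by linarith) (by linarith : (0 : ℝ) ≤ C)
  set A := η ^ 2 / 16 with hAdef
  have hA : A = γ ^ 2 * (C - 2) ^ 2 / ((1 - γ) ^ 2 * C ^ 3 * k * √(k * C - 1)) := by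
    rw [hAdef, hη]; ring
  have hA0 : 0 < A := by
    have : 0 < C - 2 := by linarith
    have : 0 < 1 - γ := by linarith
    rw [hA]; positivity
  have hexponent : 2 * (1 - γ) ^ 2 * C ^ 3 * k * √(k * C - 1) /
      (γ ^ 2 * (C - 2) ^ 2 * logb 2 (exp 1)) = (A / log 4)⁻¹ := by
    have : C - 2 ≠ 0 := by linarith
    rw [hA, logb, log_exp, log_four_eq]
    field_simp
  rw [hexponent] at htbig
  have hdecay : G t ≤ G 1 * (t : ℝ) ^ (-(A / log 4)) :=
    le_mul_rpow_neg_of_le_mul_one_sub_div hA0.le hG0 (by simpa [A, div_div] using hrec) ht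
  calc G t ≤ B * (t : ℝ) ^ (-(A / log 4)) :=
        hdecay.trans (mul_le_mul_of_nonneg_right hG1 (by positivity))
    _ ≤ B * (B / α)⁻¹ := by
        gcongr
        exact rpow_neg_le_inv_of_rpow_inv_le (by positivity) (by positivity) htbig
    _ = α := by field_simp

/-- Theorem 3: boosting guarantee for the modified Gini-entropy criterion. -/
theorem boosting_modified_gini (k : ℕ) (hk : 2 ≤ k)
    (γ : ℝ) (hγ0 : 0 < γ) (hγhalf : γ ≤ 1/2)
    (C : ℝ) (hC : 2 < C)
    (η : ℝ) (hη : η^2 = 16 * γ^2 * (C - 2)^2 /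
      ((1 - γ)^2 * C^3 * (k : ℝ) * Real.sqrt ((k : ℝ) * C - 1)))
    (G : ℕ → ℝ)
    (hG0 : ∀ t : ℕ, 1 ≤ t → 0 ≤ G t)
    (hG1 : G 1 ≤ 2 * Real.sqrt ((k : ℝ) * C - 1))
    (hrec : ∀ t : ℕ, 1 ≤ t → G (t+1) ≤ G t * (1 - η^2 / (16 * ((t : ℝ) + 1))))
    (α : ℝ) (hαlo : Real.sqrt (C - 1) ≤ α) (hαhi : α ≤ 2 * Real.sqrt ((k : ℝ) * C - 1))
    (t : ℕ) (ht : 1 ≤ t) (hpow : ∃ s : ℕ, t + 1 = 2^s)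
    (htbig : (t : ℝ) ≥ (2 * Real.sqrt ((k : ℝ) * C - 1) / α) ^
      (2 * (1 - γ)^2 * C^3 * (k : ℝ) * Real.sqrt ((k : ℝ) * C - 1) /
        (γ^2 * (C - 2)^2 * Real.logb 2 (Real.exp 1)))) :
    G t ≤ α :=
  boosting_modified_gini_general k γ hγ0 hγhalf C hC η hη G hG0 hG1 hrec α hαlo hαhi t ht htbig
end
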